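/- arXiv:2204.03902 — 5 statements merged into one kernel-verified Lean document; each statement's English description precedes it below -/
import Mathlib

section
/- For every ε > 0 there exists a rapidly decreasing (Schwartz) function f: ℝ → ℝ that is band-limited in [−(1+ε)/2, (1+ε)/2], satisfies f(0) = 1, and satisfies f(n) = 0 for every nonzero integer n. -/
/-! With `χ` the indicator of `[-1/2, 1/2]` and `ψ` a smooth even bump of integral one supported
in `[-ε/2, ε/2]`, the convolution `g = ψ ⋆ χ` is smooth, real, even and supported in
`[-(1+ε)/2, (1+ε)/2]`. Its Fourier transform `𝓕ψ · 𝓕χ` equals `1` at `0` and vanishes at the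
nonzero integers, because `𝓕χ` does. So `f = 𝓕⁻ g` is a Schwartz function with `𝓕 f = g`, it is
real because `g` is real and even, and `f n = 𝓕 g (-n)` is `1` at `n = 0` and `0` elsewhere. -/

open MeasureTheory Set

noncomputable section

/-- A function `f : ℝ → ℂ` is band-limited in `I` if its distributional Fourier transform
is supported in `I`, i.e. `⟨𝓕 f, g⟩ = ⟨f, 𝓕 g⟩ = 0` for every Schwartz function `g`
whose support is disjoint from `I`. -/
def BandLimitedIn (I : Set ℝ) (f : ℝ → ℂ) : Prop :=
  ∀ g : SchwartzMap ℝ ℂ, Disjoint (tsupport ⇑g) I →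
    ∫ t : ℝ, f t * FourierTransform.fourier (⇑g : ℝ → ℂ) t = 0

open Complex Function FourierTransform
open scoped Convolution ComplexConjugate SchwartzMap Real ContDiff Pointwise

section Fourier

variable {V : Type*} [NormedAddCommGroup V] [InnerProductSpace ℝ V] [FiniteDimensional ℝ V]
  [MeasurableSpace V] [BorelSpace V]

theorem Real.fourierInv_eq_fourier_of_neg_eq {E : Type*} [NormedAddCommGroup E]
    [NormedSpace ℂ E] {f : V → E} (hf : ∀ v, f (-v) = f v) : 𝓕⁻ f = 𝓕 f := by
  simp only [Real.fourierInv_eq_fourier_comp_neg, hf]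

theorem Real.conj_fourierInv_of_conj_eq {f : V → ℂ} (hf : ∀ v, conj (f v) = f v) (w : V) :
    conj (𝓕⁻ f w) = 𝓕 f w := by
  rw [Real.fourierInv_eq, Real.fourier_eq, ← integral_conj]
  congr 1 with v
  rw [Circle.smul_def, Circle.smul_def, smul_eq_mul, smul_eq_mul, map_mul, hf,
    ← Circle.coe_inv_eq_conj, ← AddChar.map_neg_eq_inv]

end Fourier

theorem SchwartzMap.exists_ofReal_eq {E : Type*} [NormedAddCommGroup E] [NormedSpace ℝ E]
    {F : 𝓢(E, ℂ)} (hF : ∀ x, conj (F x) = F x) : ∃ f : 𝓢(E, ℝ), ∀ x, (f x : ℂ) = F x :=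
  ⟨F.postcompCLM reCLM, fun x => conj_eq_iff_re.1 (hF x)⟩

theorem SchwartzMap.bandLimitedIn_fourierInv {I : Set ℝ} {g : 𝓢(ℝ, ℂ)} (hg : tsupport g ⊆ I) :
    BandLimitedIn I ⇑(𝓕⁻ g : 𝓢(ℝ, ℂ)) := by
  intro h hh
  rw [← fourier_coe, ← integral_fourier_mul_eq, fourier_fourierInv_eq]
  have hzero : ∀ ξ, g ξ * h ξ = 0 := by
    intro ξ
    by_cases hξ : ξ ∈ tsupport h
    · rw [image_eq_zero_of_notMem_tsupport fun hg' => disjoint_left.1 hh hξ (hg hg'), zero_mul]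
    · rw [image_eq_zero_of_notMem_tsupport hξ, mul_zero]
  simp [hzero]

def unitBox : ℝ → ℂ := (Icc (-(1 / 2) : ℝ) (1 / 2)).indicator fun _ => 1

theorem integrable_unitBox : Integrable unitBox :=
  (integrableOn_const measure_Icc_lt_top.ne).integrable_indicator measurableSet_Icc

theorem hasCompactSupport_unitBox : HasCompactSupport unitBox :=
  HasCompactSupport.intro isCompact_Icc fun _ hx => indicator_of_notMem hx _

theorem unitBox_neg (x : ℝ) : unitBox (-x) = unitBox x := by
  simp only [unitBox, indicator_apply, neg_mem_Icc_iff, neg_neg]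

theorem conj_unitBox (x : ℝ) : conj (unitBox x) = unitBox x := by
  simp only [unitBox, indicator_apply]
  split_ifs <;> simp

theorem fourier_unitBox_zero : 𝓕 unitBox 0 = 1 := by
  norm_num [Real.fourier_real_eq, unitBox, integral_indicator_const _ measurableSet_Icc]

theorem fourier_unitBox_intCast {m : ℤ} (hm : m ≠ 0) : 𝓕 unitBox m = 0 := by
  set c : ℂ := -2 * π * m * I
  have hc : c ≠ 0 := by simp [c, hm, I_ne_zero]
  calc 𝓕 unitBox m = ∫ v in -(1 / 2 : ℝ)..1 / 2, exp (c * v) := by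
        rw [Real.fourier_real_eq_integral_exp_smul, intervalIntegral.integral_of_le (by norm_num),
          ← integral_Icc_eq_integral_Ioc, ← integral_indicator measurableSet_Icc]
        congr 1 with v
        simp only [unitBox, indicator_apply, smul_eq_mul]
        split_ifs
        · simp only [c]; push_cast; ring_nf
        · rw [mul_zero]
    _ = 0 := by
        have hexp : exp (c * (1 / 2 : ℝ)) = exp (c * (-(1 / 2) : ℝ)) := by
          rw [show c * (1 / 2 : ℝ) = c * (-(1 / 2) : ℝ) + (-m : ℤ) * (2 * π * I) by
            simp only [c]; push_cast; ring, exp_add, exp_int_mul_two_pi_mul_I, mul_one]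
        rw [integral_exp_mul_complex hc, hexp, sub_self, zero_div]

namespace ContDiffBump

variable (φ : ContDiffBump (0 : ℝ))

def smoothedBox : ℝ → ℂ :=
  (fun x => (φ.normed volume x : ℂ)) ⋆[ContinuousLinearMap.mul ℂ ℂ] unitBox

-- The smoothness lemma wants a bilinear map over the field of the domain `ℝ`; `mul ℝ ℂ` and
-- `mul ℂ ℂ` give definitionally the same convolution.
theorem contDiff_smoothedBox : ContDiff ℝ ∞ φ.smoothedBox :=
  (φ.hasCompactSupport_normed.comp_left ofReal_zero).contDiff_convolution_left (n := ⊤)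
    (ContinuousLinearMap.mul ℝ ℂ)
    (ofRealCLM.contDiff.comp φ.contDiff_normed) integrable_unitBox.locallyIntegrable

theorem hasCompactSupport_smoothedBox : HasCompactSupport φ.smoothedBox :=
  (φ.hasCompactSupport_normed.comp_left ofReal_zero).convolution _ hasCompactSupport_unitBox

theorem tsupport_smoothedBox_subset :
    tsupport φ.smoothedBox ⊆ Icc (-(1 / 2 + φ.rOut)) (1 / 2 + φ.rOut) := by
  refine closure_minimal ((support_convolution_subset (ContinuousLinearMap.mul ℂ ℂ)).trans ?_)
    isClosed_Icc
  have hφ : support (fun x => (φ.normed volume x : ℂ)) ⊆ Icc (-φ.rOut) φ.rOut := by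
    refine (support_comp_eq ofReal ofReal_eq_zero (φ.normed volume)).subset.trans ?_
    rw [φ.support_normed_eq, Real.ball_eq_Ioo, zero_sub, zero_add]
    exact Ioo_subset_Icc_self
  calc support (fun x => (φ.normed volume x : ℂ)) + support unitBox
        ⊆ Icc (-φ.rOut) φ.rOut + Icc (-(1 / 2)) (1 / 2) :=
        add_subset_add hφ support_indicator_subset
    _ ⊆ Icc (-φ.rOut + -(1 / 2)) (φ.rOut + 1 / 2) := Icc_add_Icc_subset _ _ _ _
    _ = Icc (-(1 / 2 + φ.rOut)) (1 / 2 + φ.rOut) := by congr 1 <;> ring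

theorem smoothedBox_neg (x : ℝ) : φ.smoothedBox (-x) = φ.smoothedBox x :=
  convolution_neg_of_neg_eq _ (.of_forall fun y => by rw [φ.normed_neg])
    (.of_forall unitBox_neg)

theorem conj_smoothedBox (x : ℝ) : conj (φ.smoothedBox x) = φ.smoothedBox x := by
  rw [smoothedBox, convolution_def, ← integral_conj]
  simp only [ContinuousLinearMap.mul_apply', map_mul, conj_ofReal, conj_unitBox]

theorem fourier_smoothedBox (ξ : ℝ) :
    𝓕 φ.smoothedBox ξ = 𝓕 (fun x => (φ.normed volume x : ℂ)) ξ * 𝓕 unitBox ξ :=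
  Real.fourier_mul_convolution_eq φ.integrable_normed.ofReal integrable_unitBox ξ

theorem fourier_smoothedBox_intCast (m : ℤ) :
    𝓕 φ.smoothedBox m = if m = 0 then 1 else 0 := by
  rw [fourier_smoothedBox]
  split_ifs with hm
  · have hφ : 𝓕 (fun x => (φ.normed volume x : ℂ)) 0 = 1 := by
      simp [Real.fourier_real_eq, integral_complex_ofReal, φ.integral_normed]
    rw [hm, Int.cast_zero, hφ, fourier_unitBox_zero, mul_one]
  · rw [fourier_unitBox_intCast hm, mul_zero]

end ContDiffBump

/-- **Interpolation.** For every `ε > 0` there is a real Schwartz function band-limited in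
`[-(1+ε)/2, (1+ε)/2]` with `f(0) = 1` and `f(n) = 0` for every nonzero integer `n`. -/
theorem interpolation_function (ε : ℝ) (hε : 0 < ε) :
    ∃ f : SchwartzMap ℝ ℝ,
      BandLimitedIn (Icc (-((1 + ε) / 2)) ((1 + ε) / 2)) (fun t => (f t : ℂ)) ∧
      f 0 = 1 ∧ ∀ n : ℤ, n ≠ 0 → f (n : ℝ) = 0 := by
  let φ : ContDiffBump (0 : ℝ) := ⟨ε / 4, ε / 2, by positivity, by linarith⟩
  let g : 𝓢(ℝ, ℂ) := φ.hasCompactSupport_smoothedBox.toSchwartzMap φ.contDiff_smoothedBox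
  have hF : ⇑(𝓕⁻ g : 𝓢(ℝ, ℂ)) = 𝓕⁻ φ.smoothedBox := SchwartzMap.fourierInv_coe g
  have heven : 𝓕⁻ φ.smoothedBox = 𝓕 φ.smoothedBox :=
    Real.fourierInv_eq_fourier_of_neg_eq φ.smoothedBox_neg
  obtain ⟨f, hf⟩ := SchwartzMap.exists_ofReal_eq (F := (𝓕⁻ g : 𝓢(ℝ, ℂ))) fun t => by
    rw [hF, Real.conj_fourierInv_of_conj_eq φ.conj_smoothedBox, heven]
  have hvalues (m : ℤ) : (f m : ℂ) = if m = 0 then 1 else 0 := by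
    rw [hf, hF, heven, φ.fourier_smoothedBox_intCast]
  refine ⟨f, ?_, by simpa using hvalues 0, fun n hn => by simpa [hn] using hvalues n⟩
  rw [funext hf]
  refine SchwartzMap.bandLimitedIn_fourierInv (φ.tsupport_smoothedBox_subset.trans_eq ?_)
  congr 1 <;> simp only [φ] <;> ring
end
end

section
/- Let u, v be positive integers and t₁ < t₂ be real numbers with v/u + 1 < t₂ − t₁. Then there exists a rapidly decreasing (Schwartz) function f: ℝ → ℂ band-limited in [t₁, t₂] such that f(0) = 1 and f((u/v)·n) = 0 for all n ∈ ℤ \ {0}. (One may take f(x) = g((v/u)x)·e^{2πi x x₀} with x₀ = t₁ + (1 + v/u)/2 and g a real Schwartz function band-limited in [−(1+u/v)/2, (1+u/v)/2] with g(0)=1 and g(n)=0 for n ∈ ℤ\{0}.) -/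
/-!
With `a = v/u` and `s` a smooth step (`0` on `(-∞, 0]`, `1` on `[1, ∞)`), take on the frequency
side `ψ = a⁻¹ (s(· - t₁) - s(· - t₁ - a))`, a smoothed and normalised indicator of `[t₁, t₁ + a]`.
It is smooth and supported in `[t₁, t₁ + a + 1] ⊆ [t₁, t₂]`, so `f = 𝓕⁻ ψ` is a Schwartz function
band-limited in `[t₁, t₂]`. For every continuous `a`-periodic `E` the integral of `E ψ` telescopes
to the mean `a⁻¹ ∫₀^a E`. At `x = (u/v) n` the character `ξ ↦ e^{2πixξ}` is `a`-periodic, so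
`f x` is its mean over a period: `1` for `n = 0` and `0` otherwise.
-/

open MeasureTheory Set

noncomputable section

open Real FourierTransform
open scoped ContDiff SchwartzMap

theorem bandLimitedIn_fourierInv {I : Set ℝ} (ψ : 𝓢(ℝ, ℂ)) (hψ : ∀ ξ ∉ I, ψ ξ = 0) :
    BandLimitedIn I ⇑(𝓕⁻ ψ : 𝓢(ℝ, ℂ)) := by
  intro g hg
  rw [← SchwartzMap.fourier_coe, ← SchwartzMap.integral_fourier_mul_eq,
    FourierTransform.fourier_fourierInv_eq]
  have hvanish : ∀ ξ, ψ ξ * g ξ = 0 := fun ξ => by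
    by_cases hξ : ξ ∈ I
    · rw [image_eq_zero_of_notMem_tsupport (hg.notMem_of_mem_right hξ), mul_zero]
    · rw [hψ ξ hξ, zero_mul]
  simp [hvanish]

/-- Against an `a`-periodic `E`, the contributions of `g` and of its translate by `a` cancel
except on one period, where `g ≡ 1`. -/
theorem Function.Periodic.integral_mul_sub_comp_sub {E g : ℝ → ℂ} {a c d : ℝ}
    (hEa : Function.Periodic E a) (hE : Continuous E) (hg : Continuous g)
    (hg₀ : ∀ ξ ≤ c, g ξ = 0) (hg₁ : ∀ ξ, d ≤ ξ → g ξ = 1) (ha : 0 ≤ a) (hcd : c ≤ d) :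
    ∫ ξ, E ξ * (g ξ - g (ξ - a)) = ∫ ξ in 0..a, E ξ := by
  have hint : ∀ p q, IntervalIntegrable (fun ξ => E ξ * g ξ) volume p q :=
    fun p q => (hE.mul hg).intervalIntegrable p q
  have hint_shifted : IntervalIntegrable (fun ξ => E ξ * g (ξ - a)) volume c (d + a) :=
    (hE.mul (hg.comp (continuous_sub_right a))).intervalIntegrable _ _
  have hsupp : ∀ ξ ∉ Ioc c (d + a), E ξ * (g ξ - g (ξ - a)) = 0 := by
    intro ξ hξ
    rcases not_and_or.1 hξ with h | h <;> push Not at h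
    · rw [hg₀ ξ h, hg₀ (ξ - a) (by linarith), sub_self, mul_zero]
    · rw [hg₁ ξ (by linarith), hg₁ (ξ - a) (by linarith), sub_self, mul_zero]
  have hleft : ∫ ξ in (c - a)..c, E ξ * g ξ = 0 := by
    rw [← intervalIntegral.integral_zero]
    refine intervalIntegral.integral_congr fun ξ hξ => ?_
    rw [uIcc_of_le (by linarith)] at hξ
    simp [hg₀ ξ hξ.2]
  have hshifted : ∫ ξ in c..d + a, E ξ * g (ξ - a) = ∫ ξ in c..d, E ξ * g ξ := calc
    _ = ∫ ξ in c..d + a, E (ξ - a) * g (ξ - a) := by simp_rw [hEa.sub_eq]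
    _ = ∫ ξ in (c - a)..d, E ξ * g ξ := by
      rw [intervalIntegral.integral_comp_sub_right (fun ξ => E ξ * g ξ), add_sub_cancel_right]
    _ = _ := by rw [← intervalIntegral.integral_add_adjacent_intervals (hint _ c) (hint c d),
      hleft, zero_add]
  have hunshifted : ∫ ξ in c..d + a, E ξ * g ξ
      = (∫ ξ in c..d, E ξ * g ξ) + ∫ ξ in d..d + a, E ξ := by
    rw [← intervalIntegral.integral_add_adjacent_intervals (hint c d) (hint d _)]
    congr 1
    refine intervalIntegral.integral_congr fun ξ hξ => ?_
    rw [uIcc_of_le (by linarith)] at hξ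
    simp [hg₁ ξ hξ.1]
  rw [← setIntegral_eq_integral_of_forall_compl_eq_zero hsupp,
    ← intervalIntegral.integral_of_le (by linarith)]
  simp_rw [mul_sub]
  rw [intervalIntegral.integral_sub (hint _ _) hint_shifted, hshifted, hunshifted,
    add_sub_cancel_left, hEa.intervalIntegral_add_eq d 0, zero_add]

def smoothStep (c ξ : ℝ) : ℂ := smoothTransition (ξ - c)

theorem contDiff_smoothStep (c : ℝ) : ContDiff ℝ ∞ (smoothStep c) :=
  Complex.ofRealCLM.contDiff.comp (smoothTransition.contDiff.comp (contDiff_id.sub contDiff_const))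

theorem smoothStep_of_le {c ξ : ℝ} (h : ξ ≤ c) : smoothStep c ξ = 0 := by
  simp [smoothStep, smoothTransition.zero_of_nonpos, h]

theorem smoothStep_of_ge {c ξ : ℝ} (h : c + 1 ≤ ξ) : smoothStep c ξ = 1 := by
  simp [smoothStep, smoothTransition.one_of_one_le, le_sub_iff_add_le', h]

def smoothBox (a c ξ : ℝ) : ℂ := (a : ℂ)⁻¹ * (smoothStep c ξ - smoothStep c (ξ - a))

theorem contDiff_smoothBox (a c : ℝ) : ContDiff ℝ ∞ (smoothBox a c) :=
  contDiff_const.mul ((contDiff_smoothStep c).sub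
    ((contDiff_smoothStep c).comp (contDiff_id.sub contDiff_const)))

theorem smoothBox_eq_zero_of_notMem {a c ξ : ℝ} (ha : 0 ≤ a) (hξ : ξ ∉ Icc c (c + a + 1)) :
    smoothBox a c ξ = 0 := by
  rcases not_and_or.1 hξ with h | h <;> push Not at h
  · rw [smoothBox, smoothStep_of_le h.le, smoothStep_of_le (by linarith), sub_self, mul_zero]
  · rw [smoothBox, smoothStep_of_ge (by linarith), smoothStep_of_ge (by linarith), sub_self,
      mul_zero]

theorem hasCompactSupport_smoothBox {a : ℝ} (c : ℝ) (ha : 0 ≤ a) :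
    HasCompactSupport (smoothBox a c) :=
  .intro isCompact_Icc fun _ hξ => smoothBox_eq_zero_of_notMem ha hξ

theorem integral_mul_smoothBox {E : ℝ → ℂ} {a : ℝ} (c : ℝ) (hEa : Function.Periodic E a)
    (hE : Continuous E) (ha : 0 ≤ a) :
    ∫ ξ, E ξ * smoothBox a c ξ = (a : ℂ)⁻¹ * ∫ ξ in 0..a, E ξ := by
  simp_rw [smoothBox, mul_left_comm (E _)]
  rw [integral_const_mul, hEa.integral_mul_sub_comp_sub hE (contDiff_smoothStep c).continuous
    (fun _ => smoothStep_of_le) (fun _ => smoothStep_of_ge) ha (by linarith)]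

theorem fourierInv_apply_eq_integral (φ : ℝ → ℂ) (x : ℝ) :
    𝓕⁻ φ x = ∫ ξ, (𝐞 (x * ξ) : ℂ) * φ ξ := by
  simp only [Real.fourierInv_eq, Circle.smul_def, RCLike.inner_apply, conj_trivial, smul_eq_mul]

theorem periodic_fourierChar_mul {a x : ℝ} (n : ℤ) (hn : a * x = n) :
    Function.Periodic (fun ξ => (𝐞 (x * ξ) : ℂ)) a := fun ξ => by
  dsimp only
  rw [mul_add, mul_comm x a, hn, AddChar.map_add_eq_mul, fourierChar_apply' (n : ℝ),
    mul_comm _ (n : ℝ), Circle.exp_int_mul_two_pi, mul_one]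

theorem intervalIntegral_fourierChar_mul_eq_zero {a x : ℝ} (hx : x ≠ 0) (n : ℤ)
    (hn : a * x = n) :
    ∫ ξ in 0..a, (𝐞 (x * ξ) : ℂ) = 0 := by
  set c : ℂ := 2 * π * x * Complex.I
  have hc : c ≠ 0 := by simp [c, hx, pi_ne_zero]
  have hexp : ∀ ξ : ℝ, (𝐞 (x * ξ) : ℂ) = Complex.exp (2 * π * x * Complex.I * ξ) := fun ξ => by
    rw [fourierChar_apply]
    push_cast
    ring_nf
  have hperiod : (𝐞 (x * a) : ℂ) = 𝐞 (x * 0) := by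
    simpa using periodic_fourierChar_mul n hn 0
  simp_rw [hexp] at hperiod ⊢
  rw [integral_exp_mul_complex hc, hperiod, sub_self, zero_div]

theorem fourierInv_smoothBox_zero {a : ℝ} (c : ℝ) (ha : 0 < a) : 𝓕⁻ (smoothBox a c) 0 = 1 := by
  rw [fourierInv_apply_eq_integral,
    integral_mul_smoothBox c (periodic_fourierChar_mul 0 (by simp)) (by fun_prop) ha.le]
  simp [ha.ne']

theorem fourierInv_smoothBox_eq_zero {a x : ℝ} (c : ℝ) (ha : 0 ≤ a) (hx : x ≠ 0) (n : ℤ)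
    (hn : a * x = n) :
    𝓕⁻ (smoothBox a c) x = 0 := by
  rw [fourierInv_apply_eq_integral, integral_mul_smoothBox c (periodic_fourierChar_mul n hn)
    (by fun_prop) ha, intervalIntegral_fourierChar_mul_eq_zero hx n hn, mul_zero]

theorem interpolation_function_shifted_general (u v : ℕ) (hu : 0 < u) (hv : 0 < v)
    (t₁ t₂ : ℝ) (hband : (v : ℝ) / u + 1 < t₂ - t₁) :
    ∃ f : SchwartzMap ℝ ℂ,
      BandLimitedIn (Icc t₁ t₂) ⇑f ∧
      f 0 = 1 ∧ ∀ n : ℤ, n ≠ 0 → f (((u : ℝ) / v) * n) = 0 := by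
  set a : ℝ := v / u
  have ha : 0 < a := by positivity
  let ψ : 𝓢(ℝ, ℂ) :=
    (hasCompactSupport_smoothBox t₁ ha.le).toSchwartzMap (contDiff_smoothBox a t₁)
  have hf : ⇑(𝓕⁻ ψ : 𝓢(ℝ, ℂ)) = 𝓕⁻ (smoothBox a t₁) := SchwartzMap.fourierInv_coe ψ
  refine ⟨𝓕⁻ ψ, bandLimitedIn_fourierInv ψ fun ξ hξ => ?_, ?_, fun n hn => ?_⟩
  · exact smoothBox_eq_zero_of_notMem ha.le fun h => hξ ⟨h.1, by linarith [h.2]⟩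
  · rw [hf, fourierInv_smoothBox_zero t₁ ha]
  · have hax : a * (u / v * n) = n := by simp only [a]; field_simp
    rw [hf, fourierInv_smoothBox_eq_zero t₁ ha.le (by positivity) n hax]

/-- **Interpolation (shifted band).** For positive integers `u, v` and reals `t₁ < t₂` with
`v/u + 1 < t₂ - t₁`, there is a Schwartz function `f : ℝ → ℂ` band-limited in `[t₁, t₂]`
with `f(0) = 1` and `f((u/v)·n) = 0` for all nonzero integers `n`. -/
theorem interpolation_function_shifted (u v : ℕ) (hu : 0 < u) (hv : 0 < v)
    (t₁ t₂ : ℝ) (ht : t₁ < t₂) (hband : (v : ℝ) / u + 1 < t₂ - t₁) :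
    ∃ f : SchwartzMap ℝ ℂ,
      BandLimitedIn (Icc t₁ t₂) ⇑f ∧
      f 0 = 1 ∧ ∀ n : ℤ, n ≠ 0 → f (((u : ℝ) / v) * n) = 0 :=
  interpolation_function_shifted_general u v hu hv t₁ t₂ hband
end
end

section
/- Let δ > 0 and let f: ℝ → ℂ be a continuous function with |f(x)| ≤ C₁/(1+x²) for all x ∈ ℝ and some constant C₁ > 0. Let K = {z ∈ ℂ : |z| ≤ 1} and equip K^ℤ with the product topology. Then the map Φ: K^ℤ → C(ℝ, ℂ) defined by Φ((a_n)_{n∈ℤ})(x) = Σ_{n∈ℤ} a_n f(x − δn) is well defined (the series converges uniformly on every compact subset of ℝ) and continuous, where C(ℝ, ℂ) carries the topology of uniform convergence on compact subsets of ℝ. -/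
/-!
Peetre's inequality `1 + y² ≤ 2 (1 + x²) (1 + (x - y)²)` turns the decay of `f` into the bound
`‖a_n f(x - δn)‖ ≤ 2 C₁ (1 + R²) / (1 + δ²n²)` for `|x| ≤ R`, uniformly in `a ∈ K^ℤ`.
This summable majorant gives absolute and locally uniform convergence by the Weierstrass M-test,
hence joint continuity of `(a, x) ↦ Φ(a)(x)` on `K^ℤ × ℝ`; currying a jointly continuous map
gives a continuous map into `C(ℝ, ℂ)` with the compact-open topology.
-/

open Filter Topology

theorem peetre_inequality (x y : ℝ) : 1 + y ^ 2 ≤ 2 * (1 + x ^ 2) * (1 + (x - y) ^ 2) := by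
  nlinarith [sq_nonneg (x + (x - y)), sq_nonneg (x * (x - y))]

theorem norm_apply_sub_le_of_decay {E : Type*} [SeminormedAddCommGroup E] {g : ℝ → E} {C : ℝ}
    (hg : ∀ x, ‖g x‖ ≤ C / (1 + x ^ 2)) {x R : ℝ} (hx : |x| ≤ R) (y : ℝ) :
    ‖g (x - y)‖ ≤ 2 * C * (1 + R ^ 2) * (1 + y ^ 2)⁻¹ := by
  have hC : 0 ≤ C := by simpa using (norm_nonneg _).trans (hg 0)
  calc ‖g (x - y)‖ ≤ C / (1 + (x - y) ^ 2) := hg _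
    _ ≤ 2 * C * (1 + x ^ 2) * (1 + y ^ 2)⁻¹ := by
      rw [← div_eq_mul_inv, div_le_div_iff₀ (by positivity) (by positivity)]
      nlinarith [peetre_inequality x y]
    _ ≤ 2 * C * (1 + R ^ 2) * (1 + y ^ 2)⁻¹ := by
      gcongr 2 * C * (1 + ?_) * _
      exact sq_le_sq' (abs_le.1 hx).1 (abs_le.1 hx).2

theorem summable_inv_one_add_mul_sq {δ : ℝ} (hδ : δ ≠ 0) :
    Summable fun n : ℤ => (1 + (δ * n) ^ 2)⁻¹ := by
  refine ((Real.summable_one_div_int_pow.2 one_lt_two).mul_left (δ ^ 2)⁻¹)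
    |>.of_norm_bounded_eventually ?_
  filter_upwards [(Set.finite_singleton (0 : ℤ)).compl_mem_cofinite] with n hn
  have hn : (n : ℝ) ≠ 0 := by simpa using hn
  rw [Real.norm_of_nonneg (by positivity), one_div, ← mul_inv, ← mul_pow]
  exact inv_anti₀ (by positivity) (by linarith)

theorem continuous_tsum_of_locally_bounded {ι X E : Type*} [TopologicalSpace X]
    [NormedAddCommGroup E] [CompleteSpace E] {u : ι → X → E} (hu : ∀ n, Continuous (u n))
    (hbound : ∀ x, ∃ U ∈ 𝓝 x, ∃ M : ι → ℝ, Summable M ∧ ∀ n, ∀ y ∈ U, ‖u n y‖ ≤ M n) :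
    Continuous fun x => ∑' n, u n x :=
  continuous_iff_continuousAt.2 fun x => by
    obtain ⟨U, hU, M, hM, hMu⟩ := hbound x
    exact (continuousOn_tsum (fun n => (hu n).continuousOn) hM hMu).continuousAt hU

theorem interpolation_map_continuous_general (δ : ℝ) (hδ : 0 < δ)
    (f : ℝ → ℂ) (hf : Continuous f)
    (C₁ : ℝ) (hdecay : ∀ x : ℝ, ‖f x‖ ≤ C₁ / (1 + x ^ 2)) :
    (∀ a : ℤ → Metric.closedBall (0 : ℂ) 1, ∀ x : ℝ,
      Summable fun n : ℤ => ‖(a n : ℂ) * f (x - δ * n)‖) ∧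
    (∀ a : ℤ → Metric.closedBall (0 : ℂ) 1, ∀ K : Set ℝ, IsCompact K →
      TendstoUniformlyOn (fun (s : Finset ℤ) (x : ℝ) => ∑ n ∈ s, (a n : ℂ) * f (x - δ * n))
        (fun x => ∑' n : ℤ, (a n : ℂ) * f (x - δ * n)) atTop K) ∧
    (∃ Φ : (ℤ → Metric.closedBall (0 : ℂ) 1) → C(ℝ, ℂ),
      Continuous Φ ∧
      ∀ a x, Φ a x = ∑' n : ℤ, (a n : ℂ) * f (x - δ * n)) := by
  set M : ℝ → ℤ → ℝ := fun R n => 2 * C₁ * (1 + R ^ 2) * (1 + (δ * n) ^ 2)⁻¹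
  have hM (R : ℝ) : Summable (M R) := (summable_inv_one_add_mul_sq hδ.ne').mul_left _
  have hbound (a : ℤ → Metric.closedBall (0 : ℂ) 1) (R x : ℝ) (hx : |x| ≤ R) (n : ℤ) :
      ‖(a n : ℂ) * f (x - δ * n)‖ ≤ M R n := by
    rw [norm_mul]
    exact (mul_le_of_le_one_left (norm_nonneg _) (mem_closedBall_zero_iff.1 (a n).2)).trans
      (norm_apply_sub_le_of_decay hdecay hx _)
  refine ⟨fun a x => (hM |x|).of_nonneg_of_le (fun _ => norm_nonneg _) (hbound a _ x le_rfl),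
    fun a K hK => ?_, ?_⟩
  · obtain ⟨R, hR⟩ := hK.isBounded.exists_norm_le
    exact tendstoUniformlyOn_tsum (hM R) fun n x hx => hbound a R x (hR x hx) n
  · have hΦ : Continuous fun p : (ℤ → Metric.closedBall (0 : ℂ) 1) × ℝ =>
        ∑' n : ℤ, (p.1 n : ℂ) * f (p.2 - δ * n) := by
      refine continuous_tsum_of_locally_bounded (fun n => by fun_prop) fun p =>
        ⟨{q | |q.2| < |p.2| + 1}, ?_, M (|p.2| + 1), hM _, fun n q hq => hbound q.1 _ q.2 hq.le n⟩
      exact (isOpen_lt (by fun_prop) continuous_const).mem_nhds (lt_add_one |p.2|)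
    exact ⟨ContinuousMap.curry ⟨_, hΦ⟩, (ContinuousMap.curry _).continuous, fun a x => rfl⟩

/-- Let `f : ℝ → ℂ` be continuous with `|f(x)| ≤ C₁/(1+x²)` and let `K` be the closed unit
disc of `ℂ`. Then `Φ((a_n)_n)(x) = Σ_{n∈ℤ} a_n f(x - δn)` is well defined (the series
converges absolutely, uniformly on every compact subset of `ℝ`) and defines a continuous
map from `K^ℤ` (product topology) to `C(ℝ, ℂ)` (compact-open topology, i.e. the topology
of uniform convergence on compact subsets). -/
theorem interpolation_map_continuous (δ : ℝ) (hδ : 0 < δ)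
    (f : ℝ → ℂ) (hf : Continuous f)
    (C₁ : ℝ) (hC₁ : 0 < C₁) (hdecay : ∀ x : ℝ, ‖f x‖ ≤ C₁ / (1 + x ^ 2)) :
    (∀ a : ℤ → Metric.closedBall (0 : ℂ) 1, ∀ x : ℝ,
      Summable fun n : ℤ => ‖(a n : ℂ) * f (x - δ * n)‖) ∧
    (∀ a : ℤ → Metric.closedBall (0 : ℂ) 1, ∀ K : Set ℝ, IsCompact K →
      TendstoUniformlyOn (fun (s : Finset ℤ) (x : ℝ) => ∑ n ∈ s, (a n : ℂ) * f (x - δ * n))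
        (fun x => ∑' n : ℤ, (a n : ℂ) * f (x - δ * n)) atTop K) ∧
    (∃ Φ : (ℤ → Metric.closedBall (0 : ℂ) 1) → C(ℝ, ℂ),
      Continuous Φ ∧
      ∀ a x, Φ a x = ∑' n : ℤ, (a n : ℂ) * f (x - δ * n)) :=
  interpolation_map_continuous_general δ hδ f hf C₁ hdecay
end

section
/- Let I ⊆ ℝ be compact, let f: ℝ → ℂ be a rapidly decreasing (Schwartz) function band-limited in I, let δ > 0, and let (a_n)_{n∈ℤ} be a bounded sequence of complex numbers. Then the function g(x) = Σ_{n∈ℤ} a_n f(x − δn) is a bounded continuous function on ℝ that is band-limited in I. -/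
/-! Schwartz decay gives `‖f x‖ ≤ C (1 + |x|)⁻²`. By Peetre's inequality the lattice sums
`∑ₙ (1 + |x - δn|)⁻²` are bounded locally uniformly in `x`, and since they are `δ`-periodic they
are even bounded uniformly; this gives continuity and boundedness of the series. Band-limitation
passes to each term because translating `f` amounts to modulating the test function `g`, which
leaves `tsupport g` unchanged; it passes to the series because the uniform bound together with
the integrability of `𝓕 g` lets the sum be taken out of the integral. -/

open MeasureTheory Set

noncomputable section

open Filter FourierTransform
open scoped RealInnerProductSpace

def decayWeight (t : ℝ) : ℝ := ((1 + |t|) ^ 2)⁻¹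

lemma decayWeight_pos (t : ℝ) : 0 < decayWeight t := by
  unfold decayWeight
  positivity

lemma decayWeight_sub_le (x y : ℝ) : decayWeight (x - y) ≤ (1 + |x|) ^ 2 * decayWeight y := by
  have hy : 1 + |y| ≤ (1 + |x|) * (1 + |x - y|) := by
    nlinarith [abs_sub_abs_le_abs_sub y x, abs_sub_comm x y, abs_nonneg x, abs_nonneg (x - y)]
  unfold decayWeight
  rw [← div_eq_mul_inv, le_div_iff₀ (by positivity), ← div_eq_inv_mul,
    div_le_iff₀ (by positivity), ← mul_pow]
  exact pow_le_pow_left₀ (by positivity) hy 2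

lemma summable_decayWeight_mul_int {δ : ℝ} (hδ : δ ≠ 0) :
    Summable fun n : ℤ => decayWeight (δ * n) := by
  refine Summable.of_norm_bounded_eventually
    ((Real.summable_one_div_int_pow.2 one_lt_two).mul_left (δ ^ 2)⁻¹) ?_
  filter_upwards [eventually_cofinite_ne 0] with n hn
  have hsq : (δ * n) ^ 2 ≤ (1 + |δ * n|) ^ 2 := by
    rw [← sq_abs]
    exact pow_le_pow_left₀ (abs_nonneg _) (by linarith) 2
  calc ‖decayWeight (δ * n)‖ = ((1 + |δ * n|) ^ 2)⁻¹ := Real.norm_of_nonneg (decayWeight_pos _).le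
    _ ≤ ((δ * n) ^ 2)⁻¹ := inv_anti₀ (by positivity) hsq
    _ = (δ ^ 2)⁻¹ * (1 / (n : ℝ) ^ 2) := by rw [mul_pow, mul_inv, one_div]

lemma summable_decayWeight_sub_mul_int {δ : ℝ} (hδ : δ ≠ 0) (x : ℝ) :
    Summable fun n : ℤ => decayWeight (x - δ * n) :=
  ((summable_decayWeight_mul_int hδ).mul_left _).of_nonneg_of_le
    (fun _ => (decayWeight_pos _).le) fun _ => decayWeight_sub_le x _

lemma periodic_tsum_decayWeight_sub_mul_int (δ : ℝ) :
    Function.Periodic (fun x => ∑' n : ℤ, decayWeight (x - δ * n)) δ := by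
  intro x
  dsimp only
  rw [← (Equiv.addRight (1 : ℤ)).tsum_eq]
  congr 1 with n
  rw [Equiv.coe_addRight, Int.cast_add, Int.cast_one]
  ring_nf

lemma tsum_decayWeight_sub_mul_int_le {δ : ℝ} (hδ : 0 < δ) (x : ℝ) :
    ∑' n : ℤ, decayWeight (x - δ * n) ≤ (1 + δ) ^ 2 * ∑' n : ℤ, decayWeight (δ * n) := by
  obtain ⟨y, ⟨hy0, hyδ⟩, hxy⟩ := (periodic_tsum_decayWeight_sub_mul_int δ).exists_mem_Ico₀ hδ x
  rw [hxy, ← tsum_mul_left]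
  refine (summable_decayWeight_sub_mul_int hδ.ne' y).tsum_le_tsum (fun n => ?_)
    ((summable_decayWeight_mul_int hδ.ne').mul_left _)
  refine (decayWeight_sub_le y _).trans (mul_le_mul_of_nonneg_right ?_ (decayWeight_pos _).le)
  rw [abs_of_nonneg hy0]
  gcongr

lemma SchwartzMap.exists_norm_le_mul_decayWeight {E : Type*} [NormedAddCommGroup E]
    [NormedSpace ℝ E] (f : SchwartzMap ℝ E) : ∃ C, ∀ x, ‖f x‖ ≤ C * decayWeight x := by
  refine ⟨2 ^ 2 * (Finset.Iic (2, 0)).sup (fun m => SchwartzMap.seminorm ℝ m.1 m.2) f,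
    fun x => ?_⟩
  have h := SchwartzMap.one_add_le_sup_seminorm_apply (𝕜 := ℝ) (m := (2, 0)) le_rfl le_rfl f x
  rw [norm_iteratedFDeriv_zero, Real.norm_eq_abs] at h
  rw [decayWeight, le_mul_inv_iff₀ (by positivity), mul_comm]
  exact h

section LatticeSeries

variable {E : Type*} [NormedAddCommGroup E] {φ : ℤ → ℝ → E} {δ C : ℝ}

lemma nonneg_of_norm_le_mul_decayWeight (hφ : ∀ n x, ‖φ n x‖ ≤ C * decayWeight (x - δ * n)) :
    0 ≤ C := by
  simpa [decayWeight] using (norm_nonneg _).trans (hφ 0 0)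

lemma summable_norm_of_norm_le_mul_decayWeight (hδ : δ ≠ 0)
    (hφ : ∀ n x, ‖φ n x‖ ≤ C * decayWeight (x - δ * n)) (x : ℝ) :
    Summable fun n => ‖φ n x‖ :=
  ((summable_decayWeight_sub_mul_int hδ x).mul_left C).of_nonneg_of_le
    (fun _ => norm_nonneg _) fun n => hφ n x

lemma tsum_norm_le_of_norm_le_mul_decayWeight (hδ : 0 < δ)
    (hφ : ∀ n x, ‖φ n x‖ ≤ C * decayWeight (x - δ * n)) (x : ℝ) :
    ∑' n, ‖φ n x‖ ≤ C * ((1 + δ) ^ 2 * ∑' n : ℤ, decayWeight (δ * n)) :=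
  calc ∑' n, ‖φ n x‖ ≤ ∑' n : ℤ, C * decayWeight (x - δ * n) :=
        (summable_norm_of_norm_le_mul_decayWeight hδ.ne' hφ x).tsum_le_tsum (hφ · x)
          ((summable_decayWeight_sub_mul_int hδ.ne' x).mul_left C)
    _ ≤ _ := by
        rw [tsum_mul_left]
        exact mul_le_mul_of_nonneg_left (tsum_decayWeight_sub_mul_int_le hδ x)
          (nonneg_of_norm_le_mul_decayWeight hφ)

lemma continuous_tsum_of_norm_le_mul_decayWeight [CompleteSpace E] (hδ : δ ≠ 0)
    (hcont : ∀ n, Continuous (φ n)) (hφ : ∀ n x, ‖φ n x‖ ≤ C * decayWeight (x - δ * n)) :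
    Continuous fun x => ∑' n, φ n x := by
  refine continuous_iff_continuousAt.2 fun c => ?_
  set R := |c| + 1
  have hbound : ∀ n, ∀ x ∈ Ioo (-R) R, ‖φ n x‖ ≤ C * (1 + R) ^ 2 * decayWeight (δ * n) := by
    intro n x hx
    have hxR : (1 + |x|) ^ 2 ≤ (1 + R) ^ 2 := by
      have := abs_lt.2 hx
      gcongr
    calc ‖φ n x‖ ≤ C * decayWeight (x - δ * n) := hφ n x
      _ ≤ C * ((1 + R) ^ 2 * decayWeight (δ * n)) :=
          mul_le_mul_of_nonneg_left
            ((decayWeight_sub_le x _).trans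
              (mul_le_mul_of_nonneg_right hxR (decayWeight_pos _).le))
            (nonneg_of_norm_le_mul_decayWeight hφ)
      _ = _ := by ring
  refine (continuousOn_tsum (fun n => (hcont n).continuousOn)
    ((summable_decayWeight_mul_int hδ).mul_left _) hbound).continuousAt (Ioo_mem_nhds ?_ ?_)
  · linarith [neg_abs_le c]
  · linarith [le_abs_self c]

end LatticeSeries

theorem SchwartzMap.exists_tsupport_subset_fourier_shift
    {V E : Type*} [NormedAddCommGroup V] [InnerProductSpace ℝ V] [FiniteDimensional ℝ V]
    [MeasurableSpace V] [BorelSpace V] [NormedAddCommGroup E] [NormedSpace ℂ E] [CompleteSpace E]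
    (g : SchwartzMap V E) (s : V) :
    ∃ ψ : SchwartzMap V E, tsupport ψ ⊆ tsupport g ∧ ∀ y, 𝓕 (⇑ψ) y = 𝓕 (⇑g) (y + s) := by
  set G : SchwartzMap V E := 𝓕 g with hG
  set ψ := 𝓕⁻ (SchwartzMap.compSubConstCLM ℂ (-s) G)
  have hψ : ∀ x, ψ x = 𝐞 (-⟪s, x⟫) • g x := by
    intro x
    have htr : ⇑(SchwartzMap.compSubConstCLM ℂ (-s) G) = ⇑G ∘ fun v => v + s := by
      ext v
      simp [SchwartzMap.compSubConstCLM_apply]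
    have hg : 𝓕⁻ ⇑G = ⇑g := by
      rw [← SchwartzMap.fourierInv_coe, hG, FourierTransform.fourierInv_fourier_eq]
    rw [← hg, SchwartzMap.fourierInv_coe, htr]
    exact congrFun (VectorFourier.fourierIntegral_comp_add_right 𝐞 volume (-innerₗ V) G s) x
  refine ⟨ψ, closure_mono fun x hx => ?_, fun y => ?_⟩
  · rw [Function.mem_support, hψ] at hx
    exact fun hg => hx (by rw [hg, smul_zero])
  · rw [← SchwartzMap.fourier_coe, FourierTransform.fourier_fourierInv_eq,
      ← SchwartzMap.fourier_coe]
    simp [SchwartzMap.compSubConstCLM_apply, G]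

namespace BandLimitedIn

variable {I : Set ℝ}

theorem comp_sub_right {f : ℝ → ℂ} (hf : BandLimitedIn I f) (s : ℝ) :
    BandLimitedIn I fun t => f (t - s) := by
  intro g hg
  obtain ⟨ψ, hψg, hψ⟩ := g.exists_tsupport_subset_fourier_shift s
  calc ∫ t, f (t - s) * 𝓕 (⇑g) t = ∫ y, f y * 𝓕 (⇑g) (y + s) := by
        rw [← integral_add_right_eq_self _ s]
        simp
    _ = ∫ y, f y * 𝓕 (⇑ψ) y := by simp_rw [hψ]
    _ = 0 := hf ψ (hg.mono_left hψg)

theorem const_mul {f : ℝ → ℂ} (hf : BandLimitedIn I f) (c : ℂ) :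
    BandLimitedIn I fun t => c * f t := by
  intro g hg
  simp_rw [mul_assoc]
  rw [integral_const_mul, hf g hg, mul_zero]

theorem tsum {ι : Type*} [Countable ι] {φ : ι → ℝ → ℂ} (hφ : ∀ n, BandLimitedIn I (φ n))
    (hmeas : ∀ n, AEStronglyMeasurable (φ n)) {B : ℝ} (hsum : ∀ x, Summable fun n => ‖φ n x‖)
    (hB : ∀ x, ∑' n, ‖φ n x‖ ≤ B) : BandLimitedIn I fun x => ∑' n, φ n x := by
  intro g hg
  have hG : Integrable (𝓕 (⇑g)) := by
    rw [← SchwartzMap.fourier_coe]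
    exact (𝓕 g).integrable
  have hmeasF : ∀ n, AEStronglyMeasurable fun t => φ n t * 𝓕 (⇑g) t :=
    fun n => (hmeas n).mul hG.1
  have hBe : ∀ t, ∑' n, ‖φ n t‖ₑ ≤ ENNReal.ofReal B := fun t => by
    simp_rw [← ofReal_norm]
    rw [← ENNReal.ofReal_tsum_of_nonneg (fun _ => norm_nonneg _) (hsum t)]
    exact ENNReal.ofReal_le_ofReal (hB t)
  have hfin : ∑' n, ∫⁻ t, ‖φ n t * 𝓕 (⇑g) t‖ₑ ≠ ⊤ := by
    rw [← lintegral_tsum fun n => (hmeasF n).enorm]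
    simp_rw [enorm_mul, ENNReal.tsum_mul_right]
    refine (lt_of_le_of_lt (lintegral_mono fun t => mul_le_mul_left (hBe t) _) ?_).ne
    rw [lintegral_const_mul' _ _ ENNReal.ofReal_ne_top]
    exact ENNReal.mul_lt_top ENNReal.ofReal_lt_top hG.2
  calc ∫ t, (∑' n, φ n t) * 𝓕 (⇑g) t = ∫ t, ∑' n, φ n t * 𝓕 (⇑g) t := by
        simp_rw [tsum_mul_right]
    _ = ∑' n, ∫ t, φ n t * 𝓕 (⇑g) t := integral_tsum hmeasF hfin
    _ = 0 := by simp [fun n => hφ n g hg]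

end BandLimitedIn

theorem interpolation_series_bandlimited_general (I : Set ℝ)
    (f : SchwartzMap ℝ ℂ) (hf : BandLimitedIn I ⇑f)
    (δ : ℝ) (hδ : 0 < δ) (a : ℤ → ℂ) (ha : ∃ M : ℝ, ∀ n : ℤ, ‖a n‖ ≤ M) :
    Continuous (fun x : ℝ => ∑' n : ℤ, a n * f (x - δ * n)) ∧
    (∃ M : ℝ, ∀ x : ℝ, ‖∑' n : ℤ, a n * f (x - δ * n)‖ ≤ M) ∧
    BandLimitedIn I (fun x : ℝ => ∑' n : ℤ, a n * f (x - δ * n)) := by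
  obtain ⟨M, hM⟩ := ha
  obtain ⟨C, hC⟩ := f.exists_norm_le_mul_decayWeight
  set φ : ℤ → ℝ → ℂ := fun n x => a n * f (x - δ * n)
  have hφ : ∀ n x, ‖φ n x‖ ≤ M * C * decayWeight (x - δ * n) := fun n x => by
    rw [norm_mul, mul_assoc]
    exact mul_le_mul (hM n) (hC _) (norm_nonneg _) ((norm_nonneg _).trans (hM n))
  have hcont : ∀ n, Continuous (φ n) := fun n => by fun_prop
  have hsum := summable_norm_of_norm_le_mul_decayWeight hδ.ne' hφ
  have hB := tsum_norm_le_of_norm_le_mul_decayWeight hδ hφ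
  exact ⟨continuous_tsum_of_norm_le_mul_decayWeight hδ.ne' hcont hφ,
    ⟨_, fun x => (norm_tsum_le_tsum_norm (hsum x)).trans (hB x)⟩,
    BandLimitedIn.tsum (fun n => (hf.comp_sub_right _).const_mul _)
      (fun n => (hcont n).aestronglyMeasurable) hsum hB⟩

/-- If `f` is a Schwartz function band-limited in a compact set `I`, `δ > 0` and `(a_n)` is
a bounded sequence of complex numbers, then `g(x) = Σ_{n∈ℤ} a_n f(x - δn)` is a bounded
continuous function band-limited in `I`. -/
theorem interpolation_series_bandlimited (I : Set ℝ) (hI : IsCompact I)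
    (f : SchwartzMap ℝ ℂ) (hf : BandLimitedIn I ⇑f)
    (δ : ℝ) (hδ : 0 < δ) (a : ℤ → ℂ) (ha : ∃ M : ℝ, ∀ n : ℤ, ‖a n‖ ≤ M) :
    Continuous (fun x : ℝ => ∑' n : ℤ, a n * f (x - δ * n)) ∧
    (∃ M : ℝ, ∀ x : ℝ, ‖∑' n : ℤ, a n * f (x - δ * n)‖ ≤ M) ∧
    BandLimitedIn I (fun x : ℝ => ∑' n : ℤ, a n * f (x - δ * n)) :=
  interpolation_series_bandlimited_general I f hf δ hδ a ha

end
end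

section
/- Let (Y, T) be a topological dynamical system, let p be a positive integer, and let S: Y × ℤ_p → Y × ℤ_p be defined by S(y, i) = (y, i+1) for 0 ≤ i ≤ p−2 and S(y, p−1) = (T(y), 0), where ℤ_p = {0, …, p−1} is discrete. Then mdim(Y × ℤ_p, S) = mdim(Y, T)/p. -/
open Set
open scoped ENNReal NNReal

noncomputable section

/-- Lebesgue covering dimension is at most `n`: every open cover admits an open
refinement that still covers, of order at most `n + 1`. -/
def HasCovDimLE (X : Type*) [TopologicalSpace X] (n : ℕ) : Prop :=
  ∀ 𝒰 : Set (Set X), (∀ U ∈ 𝒰, IsOpen U) → ⋃₀ 𝒰 = Set.univ →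
    ∃ 𝒱 : Set (Set X), (∀ V ∈ 𝒱, IsOpen V) ∧ ⋃₀ 𝒱 = Set.univ ∧
      (∀ V ∈ 𝒱, ∃ U ∈ 𝒰, V ⊆ U) ∧
      ∀ x : X, {V | V ∈ 𝒱 ∧ x ∈ V}.encard ≤ (n : ℕ∞) + 1

/-- Lebesgue covering dimension, valued in `ℕ∞`. -/
def covDim (X : Type*) [TopologicalSpace X] : ℕ∞ :=
  ⨅ n ∈ {n : ℕ | HasCovDimLE X n}, (n : ℕ∞)

/-- `Widim_ε(X, d)`: the minimal covering dimension of a compact metrizable space `P`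
admitting a continuous `ε`-embedding `f : X → P` with respect to `d`. -/
def Widim (X : Type u) [TopologicalSpace X] (d : X → X → ℝ) (ε : ℝ) : ℕ∞ :=
  sInf {k : ℕ∞ | ∃ (P : Type u) (tP : TopologicalSpace P),
    @CompactSpace P tP ∧ @TopologicalSpace.MetrizableSpace P tP ∧
    ∃ f : X → P, @Continuous X P _ tP f ∧ (∀ x y : X, f x = f y → d x y < ε) ∧
      @covDim P tP = k}

/-- The dynamical metric `d_n(x,y) = max_{0 ≤ i ≤ n-1} d(T^i x, T^i y)`. -/
def dynDist {X : Type*} (T : X → X) (d : X → X → ℝ) (n : ℕ) (x y : X) : ℝ :=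
  ⨆ i : Fin n, d (T^[(i : ℕ)] x) (T^[(i : ℕ)] y)

/-- The full shift on `K^ℤ`. -/
def shiftZ {K : Type*} : (ℤ → K) → (ℤ → K) := fun x n => x (n + 1)

/-- The metric `D₁(x,y) = Σ_{n∈ℤ} 2^{-|n|} d(x_n, y_n)` on `K^ℤ`. -/
def D1 {K : Type*} [MetricSpace K] (x y : ℤ → K) : ℝ :=
  ∑' n : ℤ, (1 / 2 : ℝ) ^ n.natAbs * dist (x n) (y n)

/-- Mean dimension `mdim(X,T) = lim_{ε→0} lim_{n→∞} Widim_ε(X, d_n)/n`; since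
`Widim_ε(X, d_n)` is subadditive in `n` and monotone in `ε`, the iterated limit equals
`sup_{ε>0} inf_{n≥1} Widim_ε(X, d_n)/n`. -/
def mdim {X : Type u} [TopologicalSpace X] (T : X → X) (d : X → X → ℝ) : ℝ≥0∞ :=
  ⨆ ε : {ε : ℝ // 0 < ε}, ⨅ n : ℕ+, (Widim X (dynDist T d n) ε.1 : ℝ≥0∞) / ((n : ℕ) : ℝ≥0∞)

/-- A system `(X, T)` is minimal if `X` has no nonempty proper closed `T`-invariant
subset. -/
def IsMinimalSystem {X : Type*} [TopologicalSpace X] (T : X → X) : Prop :=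
  ∀ Z : Set X, IsClosed Z → Z.Nonempty → T '' Z = Z → Z = Set.univ

/-- The `p`-cyclic extension `S` of a system `(Y, T)`:
`S(y, i) = (y, i+1)` for `0 ≤ i ≤ p-2` and `S(y, p-1) = (T y, 0)`. -/
def cyclicExt {Y : Type*} (T : Y → Y) (p : ℕ) [NeZero p] : Y × Fin p → Y × Fin p :=
  fun z => (if (z.2 : ℕ) = p - 1 then T z.1 else z.1, z.2 + 1)

/-! ### Basic ℕ∞ facts -/

lemma enat_sInf_mem {S : Set ℕ∞} (h : S.Nonempty) : sInf S ∈ S := by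
  by_cases hn : ∃ n : ℕ, (n : ℕ∞) ∈ S
  · obtain ⟨n, hn⟩ := hn
    have hA : {k : ℕ | (k : ℕ∞) ∈ S}.Nonempty := ⟨n, hn⟩
    have hmem := Nat.sInf_mem hA
    have heq : sInf S = ((sInf {k : ℕ | (k : ℕ∞) ∈ S} : ℕ) : ℕ∞) := by
      refine le_antisymm (sInf_le hmem) (le_sInf fun b hb => ?_)
      induction b using ENat.recTopCoe with
      | top => exact le_top
      | coe m => exact_mod_cast Nat.sInf_le hb
    rw [heq]; exact hmem
  · obtain ⟨a, ha⟩ := h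
    have hall : ∀ b ∈ S, b = ⊤ := by
      intro b hb
      induction b using ENat.recTopCoe with
      | top => rfl
      | coe m => exact absurd ⟨m, hb⟩ hn
    rw [sInf_eq_top.2 hall]
    rw [hall a ha] at ha; exact ha

/-! ### covDim basic lemmas -/

lemma hasCovDimLE_mono {X : Type*} [TopologicalSpace X] {m n : ℕ} (h : m ≤ n)
    (hm : HasCovDimLE X m) : HasCovDimLE X n := by
  intro 𝒰 ho hc
  obtain ⟨𝒱, h1, h2, h3, h4⟩ := hm 𝒰 ho hc
  refine ⟨𝒱, h1, h2, h3, fun x => (h4 x).trans ?_⟩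
  exact add_le_add_left (by exact_mod_cast h) 1

lemma covDim_le_of_hasCovDimLE {X : Type*} [TopologicalSpace X] {n : ℕ}
    (h : HasCovDimLE X n) : covDim X ≤ n :=
  iInf₂_le n h

lemma hasCovDimLE_of_covDim_le {X : Type*} [TopologicalSpace X] {n : ℕ}
    (h : covDim X ≤ n) : HasCovDimLE X n := by
  by_contra hc
  have key : ∀ k ∈ {k : ℕ | HasCovDimLE X k}, ((n : ℕ∞) + 1 ≤ (k : ℕ∞)) := by
    intro k hk
    by_contra hlt
    push_neg at hlt
    have hkn : k ≤ n := by
      have : (k : ℕ∞) < (n : ℕ∞) + 1 := hlt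
      have : (k : ℕ∞) < ((n + 1 : ℕ) : ℕ∞) := by push_cast; exact this
      exact Nat.lt_succ_iff.1 (by exact_mod_cast this)
    exact hc (hasCovDimLE_mono hkn hk)
  have h1 : (n : ℕ∞) + 1 ≤ covDim X := le_iInf₂ key
  have h2 : (n : ℕ∞) + 1 ≤ (n : ℕ∞) := h1.trans h
  have : ((n + 1 : ℕ) : ℕ∞) ≤ ((n : ℕ) : ℕ∞) := by push_cast; exact h2
  exact absurd (by exact_mod_cast this) (Nat.not_succ_le_self n)


/-! ### Product with a finite discrete space -/

lemma hasCovDimLE_prod_fin {P : Type*} [TopologicalSpace P] {n p : ℕ} [NeZero p]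
    (h : HasCovDimLE P n) : HasCovDimLE (P × Fin p) n := by
  classical
  intro 𝒰 hUo hUc
  have hsec : ∀ j : Fin p, Continuous (fun x : P => (x, j)) :=
    fun j => continuous_id.prodMk continuous_const
  have hcov : ∀ j : Fin p, ⋃₀ ((fun U => (fun x : P => (x, j)) ⁻¹' U) '' 𝒰) = Set.univ := by
    intro j
    apply Set.eq_univ_of_forall
    intro x
    have : (x, j) ∈ ⋃₀ 𝒰 := by rw [hUc]; trivial
    obtain ⟨U, hU, hxU⟩ := this
    exact ⟨_, ⟨U, hU, rfl⟩, hxU⟩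
  have hop : ∀ j : Fin p, ∀ V ∈ ((fun U => (fun x : P => (x, j)) ⁻¹' U) '' 𝒰), IsOpen V := by
    rintro j V ⟨U, hU, rfl⟩
    exact (hUo U hU).preimage (hsec j)
  choose 𝒱 hVo hVc hVr hVord using fun j : Fin p =>
    h ((fun U => (fun x : P => (x, j)) ⁻¹' U) '' 𝒰) (hop j) (hcov j)
  refine ⟨⋃ j : Fin p, (fun V => V ×ˢ ({j} : Set (Fin p))) '' 𝒱 j, ?_, ?_, ?_, ?_⟩
  · rintro W hW
    simp only [Set.mem_iUnion, Set.mem_image] at hW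
    obtain ⟨j, V, hV, rfl⟩ := hW
    exact (hVo j V hV).prod (isOpen_discrete _)
  · apply Set.eq_univ_of_forall
    rintro ⟨x, j⟩
    have : x ∈ ⋃₀ 𝒱 j := by rw [hVc j]; trivial
    obtain ⟨V, hV, hxV⟩ := this
    refine ⟨V ×ˢ ({j} : Set (Fin p)), ?_, hxV, rfl⟩
    simp only [Set.mem_iUnion, Set.mem_image]
    exact ⟨j, V, hV, rfl⟩
  · rintro W hW
    simp only [Set.mem_iUnion, Set.mem_image] at hW
    obtain ⟨j, V, hV, rfl⟩ := hW
    obtain ⟨U', ⟨U, hU, rfl⟩, hVU⟩ := hVr j V hV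
    refine ⟨U, hU, ?_⟩
    rintro ⟨a, b⟩ ⟨ha, hb⟩
    have hb' : b = j := hb
    subst hb'
    exact hVU ha
  · rintro ⟨x, j⟩
    have hsub : {W | W ∈ ⋃ j : Fin p, (fun V => V ×ˢ ({j} : Set (Fin p))) '' 𝒱 j ∧ (x, j) ∈ W}
        ⊆ (fun V => V ×ˢ ({j} : Set (Fin p))) '' {V | V ∈ 𝒱 j ∧ x ∈ V} := by
      rintro W ⟨hW, hxW⟩
      simp only [Set.mem_iUnion, Set.mem_image] at hW
      obtain ⟨j', V, hV, rfl⟩ := hW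
      have : j = j' := hxW.2
      subst this
      exact ⟨V, ⟨hV, hxW.1⟩, rfl⟩
    calc {W | W ∈ _ ∧ (x, j) ∈ W}.encard ≤ _ := Set.encard_le_encard hsub
    _ ≤ {V | V ∈ 𝒱 j ∧ x ∈ V}.encard := Set.encard_image_le _ _
    _ ≤ (n : ℕ∞) + 1 := hVord j x

lemma covDim_prod_fin_le {P : Type*} [TopologicalSpace P] (p : ℕ) [NeZero p] :
    covDim (P × Fin p) ≤ covDim P := by
  rcases eq_or_ne (covDim P) ⊤ with h | h
  · rw [h]; exact le_top
  · obtain ⟨kn, hkn⟩ := WithTop.ne_top_iff_exists.1 h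
    rw [← hkn]
    exact covDim_le_of_hasCovDimLE (hasCovDimLE_prod_fin
      (hasCovDimLE_of_covDim_le (le_of_eq hkn.symm)))

/-! ### dynDist lemmas -/

lemma le_dynDist {X : Type*} (T : X → X) (d : X → X → ℝ) {n : ℕ} (i : Fin n) (x y : X) :
    d (T^[(i : ℕ)] x) (T^[(i : ℕ)] y) ≤ dynDist T d n x y :=
  le_ciSup (Set.Finite.bddAbove (Set.finite_range
    (fun i : Fin n => d (T^[(i : ℕ)] x) (T^[(i : ℕ)] y)))) i

lemma dynDist_lt {X : Type*} (T : X → X) (d : X → X → ℝ) {n : ℕ} (hn : n ≠ 0) {x y : X}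
    {c : ℝ} (h : ∀ i : Fin n, d (T^[(i : ℕ)] x) (T^[(i : ℕ)] y) < c) :
    dynDist T d n x y < c := by
  haveI : Nonempty (Fin n) := Fin.pos_iff_nonempty.1 (Nat.pos_of_ne_zero hn)
  obtain ⟨i0, hi0⟩ := Finite.exists_max (fun i : Fin n => d (T^[(i : ℕ)] x) (T^[(i : ℕ)] y))
  exact lt_of_le_of_lt (ciSup_le fun i => hi0 i) (h i0)

lemma dynDist_mono {X : Type*} (T : X → X) (d : X → X → ℝ) {n n' : ℕ} (hn : n ≠ 0)
    (h : n ≤ n') (x y : X) : dynDist T d n x y ≤ dynDist T d n' x y := by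
  haveI : Nonempty (Fin n) := Fin.pos_iff_nonempty.1 (Nat.pos_of_ne_zero hn)
  exact ciSup_le fun i => le_dynDist T d (Fin.castLE h i) x y

/-! ### Widim lemmas -/

lemma Widim_mono_d {X : Type u} [TopologicalSpace X] {d d' : X → X → ℝ} {ε : ℝ}
    (h : ∀ x y, d x y ≤ d' x y) : Widim X d ε ≤ Widim X d' ε := by
  apply sInf_le_sInf
  rintro k ⟨P, tP, h1, h2, f, h3, h4, h5⟩
  exact ⟨P, tP, h1, h2, f, h3, fun x y hxy => lt_of_le_of_lt (h x y) (h4 x y hxy), h5⟩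


/-! ### Combinatorial chain lemma -/

lemma chain_card : ∀ (N : ℕ) (S : Finset (ℕ × ℕ)), S.card ≤ N → S.Nonempty →
    (∀ q ∈ S, ∀ q' ∈ S, (q.1 ≤ q'.1 ∧ q.2 ≤ q'.2) ∨ (q'.1 ≤ q.1 ∧ q'.2 ≤ q.2)) →
    S.card + 1 ≤ (S.image Prod.fst).card + (S.image Prod.snd).card := by
  classical
  intro N
  induction N with
  | zero =>
    intro S hS hne _
    obtain ⟨q, hq⟩ := hne
    have := Finset.card_pos.2 ⟨q, hq⟩
    omega
  | succ N ih =>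
    intro S hS hne hchain
    obtain ⟨q, hq, hmax'⟩ := Finset.exists_max_image S (fun q => q.1 + q.2) hne
    have hmax : ∀ q' ∈ S, q'.1 ≤ q.1 ∧ q'.2 ≤ q.2 := by
      intro q' hq'
      rcases hchain q' hq' q hq with h | h
      · exact h
      · have := hmax' q' hq'; omega
    set S' := S.erase q with hS'
    have hcardS : S.card = S'.card + 1 := by
      rw [hS', Finset.card_erase_of_mem hq]
      have := Finset.card_pos.2 ⟨q, hq⟩
      omega
    rcases S'.eq_empty_or_nonempty with h0 | hne'
    · have hsingle : S = {q} := by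
        apply Finset.eq_singleton_iff_unique_mem.2
        refine ⟨hq, fun x hx => ?_⟩
        by_contra hx'
        exact (Finset.notMem_empty x) (h0 ▸ Finset.mem_erase.2 ⟨hx', hx⟩)
      rw [hsingle]
      simp
    · have hchain' : ∀ a ∈ S', ∀ b ∈ S', (a.1 ≤ b.1 ∧ a.2 ≤ b.2) ∨ (b.1 ≤ a.1 ∧ b.2 ≤ a.2) :=
        fun a ha b hb => hchain a (Finset.mem_of_mem_erase ha) b (Finset.mem_of_mem_erase hb)
      have hcard' : S'.card ≤ N := by omega
      have IH := ih S' hcard' hne' hchain'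
      have hkey : q.1 ∉ S'.image Prod.fst ∨ q.2 ∉ S'.image Prod.snd := by
        by_contra hc
        push_neg at hc
        obtain ⟨a, ha, ha1⟩ := Finset.mem_image.1 hc.1
        obtain ⟨b, hb, hb1⟩ := Finset.mem_image.1 hc.2
        have haq : a ≠ q := Finset.ne_of_mem_erase ha
        have hbq : b ≠ q := Finset.ne_of_mem_erase hb
        have ha2 : a.2 < q.2 := by
          have h1 := (hmax a (Finset.mem_of_mem_erase ha)).2
          rcases lt_or_eq_of_le h1 with h | h
          · exact h
          · exact absurd (Prod.ext ha1 h) haq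
        have hb2 : b.1 < q.1 := by
          have h1 := (hmax b (Finset.mem_of_mem_erase hb)).1
          rcases lt_or_eq_of_le h1 with h | h
          · exact h
          · exact absurd (Prod.ext h hb1) hbq
        rcases hchain a (Finset.mem_of_mem_erase ha) b (Finset.mem_of_mem_erase hb) with h | h
        · omega
        · omega
      have himf : S.image Prod.fst = insert q.1 (S'.image Prod.fst) := by
        conv_lhs => rw [← Finset.insert_erase hq]
        rw [Finset.image_insert]
      have hims : S.image Prod.snd = insert q.2 (S'.image Prod.snd) := by
        conv_lhs => rw [← Finset.insert_erase hq]
        rw [Finset.image_insert]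
      rcases hkey with h | h
      · have h1 : (S.image Prod.fst).card = (S'.image Prod.fst).card + 1 := by
          rw [himf, Finset.card_insert_of_notMem h]
        have h2 : (S'.image Prod.snd).card ≤ (S.image Prod.snd).card :=
          Finset.card_le_card (Finset.image_subset_image (Finset.erase_subset _ _))
        omega
      · have h1 : (S.image Prod.snd).card = (S'.image Prod.snd).card + 1 := by
          rw [hims, Finset.card_insert_of_notMem h]
        have h2 : (S'.image Prod.fst).card ≤ (S.image Prod.fst).card :=
          Finset.card_le_card (Finset.image_subset_image (Finset.erase_subset _ _))
        omega


/-! ### Partition of unity with order control -/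

lemma exists_pou {X : Type*} [MetricSpace X] [CompactSpace X] [Nonempty X] {m : ℕ}
    (hX : HasCovDimLE X m) (δ : ℝ) (hδ : 0 < δ) :
    ∃ (k : ℕ) (U : Fin k → Set X) (φ : Fin k → X → ℝ),
      (∀ i, ∃ c, U i ⊆ Metric.ball c δ) ∧
      (∀ i, Continuous (φ i)) ∧ (∀ i x, 0 ≤ φ i x) ∧
      (∀ x, ∑ i, φ i x = 1) ∧
      (∀ i x, φ i x ≠ 0 → x ∈ U i) ∧
      (∀ x : X, ({i | φ i x ≠ 0} : Set (Fin k)).encard ≤ (m : ℕ∞) + 1) := by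
  classical
  -- refine the ball cover
  have hballs : ∀ U ∈ Set.range (fun c : X => Metric.ball c δ), IsOpen U := by
    rintro U ⟨c, rfl⟩; exact Metric.isOpen_ball
  have hballc : ⋃₀ Set.range (fun c : X => Metric.ball c δ) = Set.univ := by
    apply Set.eq_univ_of_forall
    intro x
    exact ⟨Metric.ball x δ, ⟨x, rfl⟩, Metric.mem_ball_self hδ⟩
  obtain ⟨𝒱, hVo, hVc, hVr, hVord⟩ := hX _ hballs hballc
  -- finite subcover
  have hcover : Set.univ ⊆ ⋃ V : 𝒱, (V : Set X) := by
    intro x _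
    have : x ∈ ⋃₀ 𝒱 := by rw [hVc]; trivial
    obtain ⟨V, hV, hxV⟩ := this
    exact Set.mem_iUnion.2 ⟨⟨V, hV⟩, hxV⟩
  obtain ⟨t, ht⟩ := isCompact_univ.elim_finite_subcover (fun V : 𝒱 => (V : Set X))
    (fun V => hVo V V.2) hcover
  set F : Finset (Set X) := t.image Subtype.val with hF
  have hFsub : ∀ V ∈ F, V ∈ 𝒱 := by
    intro V hV
    obtain ⟨W, _, rfl⟩ := Finset.mem_image.1 hV
    exact W.2
  have hFcov : ∀ x : X, ∃ V ∈ F, x ∈ V := by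
    intro x
    have hx := ht (Set.mem_univ x)
    simp only [Set.mem_iUnion] at hx
    obtain ⟨V, hVt, hxV⟩ := hx
    exact ⟨(V : Set X), Finset.mem_image.2 ⟨V, hVt, rfl⟩, hxV⟩
  -- index
  set k := F.card with hk
  set e : Fin k → Set X := fun i => (F.equivFin.symm i : Set X) with he
  have hemem : ∀ i, e i ∈ F := fun i => (F.equivFin.symm i).2
  have heinj : Function.Injective e := fun i j hij => by
    have := Subtype.ext hij
    exact F.equivFin.symm.injective this
  -- bump functions
  set g : Fin k → X → ℝ := fun i x => if (e i)ᶜ = (∅ : Set X) then 1 else Metric.infDist x (e i)ᶜ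
    with hg
  have hgcont : ∀ i, Continuous (g i) := by
    intro i
    by_cases hc : (e i)ᶜ = (∅ : Set X)
    · simp only [hg, if_pos hc]; exact continuous_const
    · simp only [hg, if_neg hc]; exact Metric.continuous_infDist_pt _
  have hgnonneg : ∀ i x, 0 ≤ g i x := by
    intro i x
    simp only [hg]
    split_ifs
    · norm_num
    · exact Metric.infDist_nonneg
  have hgpos : ∀ i x, x ∈ e i → 0 < g i x := by
    intro i x hx
    by_cases hc : (e i)ᶜ = (∅ : Set X)
    · have h1 : g i x = 1 := by simp only [hg]; rw [if_pos hc]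
      rw [h1]; norm_num
    · simp only [hg, if_neg hc]
      exact (IsClosed.notMem_iff_infDist_pos (isOpen_compl_iff.1 (by
        simp only [compl_compl]; exact hVo _ (hFsub _ (hemem i))))
        (Set.nonempty_iff_ne_empty.2 hc)).1 (by simpa using hx)
  have hgmem : ∀ i x, g i x ≠ 0 → x ∈ e i := by
    intro i x hgx
    by_cases hc : (e i)ᶜ = (∅ : Set X)
    · have : e i = Set.univ := Set.compl_empty_iff.1 hc
      rw [this]; trivial
    · by_contra hx
      exact hgx (by simp only [hg, if_neg hc]; exact Metric.infDist_zero_of_mem (by simpa using hx))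
  -- normalization
  set G : X → ℝ := fun x => ∑ i, g i x with hG
  have hGcont : Continuous G := continuous_finset_sum _ fun i _ => hgcont i
  have hGpos : ∀ x, 0 < G x := by
    intro x
    obtain ⟨V, hVF, hxV⟩ := hFcov x
    have : ∃ i, e i = V := ⟨F.equivFin ⟨V, hVF⟩, by simp [he]⟩
    obtain ⟨i, rfl⟩ := this
    exact Finset.sum_pos' (fun j _ => hgnonneg j x) ⟨i, Finset.mem_univ i, hgpos i x hxV⟩
  set φ : Fin k → X → ℝ := fun i x => g i x / G x with hφ
  refine ⟨k, e, φ, ?_, ?_, ?_, ?_, ?_, ?_⟩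
  · intro i
    obtain ⟨U, ⟨c, rfl⟩, hsub⟩ := hVr _ (hFsub _ (hemem i))
    exact ⟨c, hsub⟩
  · intro i
    exact (hgcont i).div hGcont fun x => (hGpos x).ne'
  · intro i x
    exact div_nonneg (hgnonneg i x) (hGpos x).le
  · intro x
    simp only [hφ]
    rw [← Finset.sum_div]
    exact div_self (hGpos x).ne'
  · intro i x hx
    apply hgmem i x
    intro h0
    exact hx (by simp [hφ, h0])
  · intro x
    have hsub : ({i | φ i x ≠ 0} : Set (Fin k)) ⊆ {i | x ∈ e i} := by
      intro i hi
      apply hgmem i x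
      intro h0
      exact hi (by simp [hφ, h0])
    have hinj : Set.InjOn e {i | x ∈ e i} := heinj.injOn
    have himg : e '' {i | x ∈ e i} ⊆ {V | V ∈ 𝒱 ∧ x ∈ V} := by
      rintro V ⟨i, hi, rfl⟩
      exact ⟨hFsub _ (hemem i), hi⟩
    calc ({i | φ i x ≠ 0} : Set (Fin k)).encard
        ≤ ({i | x ∈ e i} : Set (Fin k)).encard := Set.encard_le_encard hsub
      _ = (e '' {i | x ∈ e i}).encard := (hinj.encard_image).symm
      _ ≤ {V | V ∈ 𝒱 ∧ x ∈ V}.encard := Set.encard_le_encard himg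
      _ ≤ (m : ℕ∞) + 1 := hVord x


/-! ### The product theorem for covering dimension (compact metric spaces) -/

theorem hasCovDimLE_prod {X Y : Type*} [MetricSpace X] [CompactSpace X]
    [MetricSpace Y] [CompactSpace Y] {m n : ℕ}
    (hX : HasCovDimLE X m) (hY : HasCovDimLE Y n) : HasCovDimLE (X × Y) (m + n) := by
  classical
  intro 𝒲 hWo hWc
  rcases isEmpty_or_nonempty (X × Y) with hE | hNE
  · refine ⟨∅, by simp, ?_, by simp, by simp⟩
    rw [Set.sUnion_empty]
    exact (Set.univ_eq_empty_iff.2 hE).symm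
  haveI : Nonempty X := ⟨hNE.some.1⟩
  haveI : Nonempty Y := ⟨hNE.some.2⟩
  obtain ⟨δ, hδ, hleb⟩ := lebesgue_number_lemma_of_metric_sUnion isCompact_univ hWo (hWc ▸ subset_rfl)
  obtain ⟨k, U, φ, hUball, hφcont, hφnonneg, hφsum, hφmem, hφord⟩ := exists_pou hX δ hδ
  obtain ⟨l, O, ψ, hOball, hψcont, hψnonneg, hψsum, hψmem, hψord⟩ := exists_pou hY δ hδ
  -- cumulative sums
  set A : ℕ → X → ℝ := fun t x => ∑ i ∈ Finset.univ.filter (fun i : Fin k => (i : ℕ) < t), φ i x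
    with hA
  set B : ℕ → Y → ℝ := fun t y => ∑ j ∈ Finset.univ.filter (fun j : Fin l => (j : ℕ) < t), ψ j y
    with hB
  have hAcont : ∀ t, Continuous (A t) := fun t => continuous_finset_sum _ fun i _ => hφcont i
  have hBcont : ∀ t, Continuous (B t) := fun t => continuous_finset_sum _ fun j _ => hψcont j
  have hAmono : ∀ s t (x : X), s ≤ t → A s x ≤ A t x := by
    intro s t x hst
    apply Finset.sum_le_sum_of_subset_of_nonneg
    · exact Finset.monotone_filter_right _ fun i _ hi => lt_of_lt_of_le hi hst
    · exact fun i _ _ => hφnonneg i x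
  have hBmono : ∀ s t (y : Y), s ≤ t → B s y ≤ B t y := by
    intro s t y hst
    apply Finset.sum_le_sum_of_subset_of_nonneg
    · exact Finset.monotone_filter_right _ fun i _ hi => lt_of_lt_of_le hi hst
    · exact fun j _ _ => hψnonneg j y
  have hA0 : ∀ x, A 0 x = 0 := by intro x; simp [hA]
  have hB0 : ∀ y, B 0 y = 0 := by intro y; simp [hB]
  have hAtop : ∀ x, A k x = 1 := by
    intro x
    rw [hA]
    simp only []
    rw [Finset.filter_true_of_mem (fun i _ => i.isLt), hφsum x]
  have hBtop : ∀ y, B l y = 1 := by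
    intro y
    rw [hB]
    simp only []
    rw [Finset.filter_true_of_mem (fun j _ => j.isLt), hψsum y]
  have hAsucc : ∀ (t : ℕ) (h : t < k) (x : X), A (t + 1) x = A t x + φ ⟨t, h⟩ x := by
    intro t h x
    have hfil : Finset.univ.filter (fun i : Fin k => (i : ℕ) < t + 1)
        = insert (⟨t, h⟩ : Fin k) (Finset.univ.filter (fun i : Fin k => (i : ℕ) < t)) := by
      ext i
      simp only [Finset.mem_filter, Finset.mem_univ, true_and, Finset.mem_insert]
      constructor
      · intro hi
        rcases Nat.lt_succ_iff_lt_or_eq.1 hi with h1 | h1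
        · exact Or.inr (by simpa using h1)
        · exact Or.inl (Fin.ext h1)
      · rintro (rfl | hi)
        · exact Nat.lt_succ_self t
        · exact Nat.lt_succ_of_lt hi
    rw [hA]
    simp only []
    rw [hfil, Finset.sum_insert (by simp), add_comm]
  have hBsucc : ∀ (t : ℕ) (h : t < l) (y : Y), B (t + 1) y = B t y + ψ ⟨t, h⟩ y := by
    intro t h y
    have hfil : Finset.univ.filter (fun j : Fin l => (j : ℕ) < t + 1)
        = insert (⟨t, h⟩ : Fin l) (Finset.univ.filter (fun j : Fin l => (j : ℕ) < t)) := by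
      ext j
      simp only [Finset.mem_filter, Finset.mem_univ, true_and, Finset.mem_insert]
      constructor
      · intro hj
        rcases Nat.lt_succ_iff_lt_or_eq.1 hj with h1 | h1
        · exact Or.inr (by simpa using h1)
        · exact Or.inl (Fin.ext h1)
      · rintro (rfl | hj)
        · exact Nat.lt_succ_self t
        · exact Nat.lt_succ_of_lt hj
    rw [hB]
    simp only []
    rw [hfil, Finset.sum_insert (by simp), add_comm]
  -- the refinement
  set W : ℕ → ℕ → Set (X × Y) := fun i j =>
    {z : X × Y | max (A i z.1) (B j z.2) < min (A (i + 1) z.1) (B (j + 1) z.2)} with hW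
  set 𝒱 : Set (Set (X × Y)) := (fun q : ℕ × ℕ => W q.1 q.2) '' {q | q.1 < k ∧ q.2 < l} with h𝒱
  -- membership facts
  have hφpos : ∀ (i : ℕ) (hik : i < k) (j : ℕ) (z : X × Y), z ∈ W i j → φ ⟨i, hik⟩ z.1 ≠ 0 := by
    intro i hik j z hz
    have h1 : A i z.1 < A (i + 1) z.1 :=
      lt_of_le_of_lt (le_max_left _ _) (lt_of_lt_of_le hz (min_le_left _ _))
    rw [hAsucc i hik z.1] at h1
    intro h0
    rw [h0] at h1
    simp at h1
  have hψpos : ∀ (j : ℕ) (hjl : j < l) (i : ℕ) (z : X × Y), z ∈ W i j → ψ ⟨j, hjl⟩ z.2 ≠ 0 := by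
    intro j hjl i z hz
    have h1 : B j z.2 < B (j + 1) z.2 :=
      lt_of_le_of_lt (le_max_right _ _) (lt_of_lt_of_le hz (min_le_right _ _))
    rw [hBsucc j hjl z.2] at h1
    intro h0
    rw [h0] at h1
    simp at h1
  refine ⟨𝒱, ?_, ?_, ?_, ?_⟩
  · rintro V ⟨⟨i, j⟩, _, rfl⟩
    exact isOpen_lt (((hAcont i).comp continuous_fst).max ((hBcont j).comp continuous_snd))
      (((hAcont (i + 1)).comp continuous_fst).min ((hBcont (j + 1)).comp continuous_snd))
  · apply Set.eq_univ_of_forall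
    rintro ⟨x, y⟩
    set E : Finset ℝ := (Finset.image (fun t => A t x) (Finset.range (k + 1))) ∪
      (Finset.image (fun s => B s y) (Finset.range (l + 1))) with hE
    obtain ⟨θ, hθmem, hθnot⟩ := (Set.Ioo_infinite (zero_lt_one (α := ℝ))).exists_notMem_finset E
    have hθ0 : (0 : ℝ) < θ := hθmem.1
    have hθ1 : θ < 1 := hθmem.2
    have hAne : ∀ t, t ≤ k → A t x ≠ θ := by
      intro t ht h
      exact hθnot (Finset.mem_union_left _ (Finset.mem_image.2
        ⟨t, Finset.mem_range.2 (Nat.lt_succ_of_le ht), h⟩))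
    have hBne : ∀ t, t ≤ l → B t y ≠ θ := by
      intro t ht h
      exact hθnot (Finset.mem_union_right _ (Finset.mem_image.2
        ⟨t, Finset.mem_range.2 (Nat.lt_succ_of_le ht), h⟩))
    set i := Nat.findGreatest (fun t => A t x < θ) k with hi
    have hik : i ≤ k := Nat.findGreatest_le k
    have hPi : A i x < θ := by
      have := Nat.findGreatest_spec (P := fun t => A t x < θ) (Nat.zero_le k)
        (by show A 0 x < θ; rw [hA0]; exact hθ0)
      simpa [hi] using this
    have hiklt : i < k := by
      rcases lt_or_eq_of_le hik with h | h
      · exact h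
      · exfalso; rw [h, hAtop] at hPi; exact absurd hPi (not_lt.2 hθ1.le)
    have hPi1 : θ < A (i + 1) x := by
      have h1 : ¬ A (i + 1) x < θ := by
        have := Nat.findGreatest_is_greatest (P := fun t => A t x < θ)
          (n := k) (k := i + 1) (by rw [← hi]; exact Nat.lt_succ_self i) hiklt
        simpa using this
      rcases lt_or_eq_of_le (not_lt.1 h1) with h | h
      · exact h
      · exact absurd h.symm (hAne (i + 1) hiklt)
    set j := Nat.findGreatest (fun t => B t y < θ) l with hj
    have hjl : j ≤ l := Nat.findGreatest_le l
    have hPj : B j y < θ := by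
      have := Nat.findGreatest_spec (P := fun t => B t y < θ) (Nat.zero_le l)
        (by show B 0 y < θ; rw [hB0]; exact hθ0)
      simpa [hj] using this
    have hjllt : j < l := by
      rcases lt_or_eq_of_le hjl with h | h
      · exact h
      · exfalso; rw [h, hBtop] at hPj; exact absurd hPj (not_lt.2 hθ1.le)
    have hPj1 : θ < B (j + 1) y := by
      have h1 : ¬ B (j + 1) y < θ := by
        have := Nat.findGreatest_is_greatest (P := fun t => B t y < θ)
          (n := l) (k := j + 1) (by rw [← hj]; exact Nat.lt_succ_self j) hjllt
        simpa using this
      rcases lt_or_eq_of_le (not_lt.1 h1) with h | h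
      · exact h
      · exact absurd h.symm (hBne (j + 1) hjllt)
    refine ⟨W i j, ⟨(i, j), ⟨hiklt, hjllt⟩, rfl⟩, ?_⟩
    show max (A i x) (B j y) < min (A (i + 1) x) (B (j + 1) y)
    exact max_lt_iff.2 ⟨hPi, hPj⟩ |>.trans_le (le_min (le_of_lt hPi1) (le_of_lt hPj1)) |>.trans_le
      le_rfl |>.trans_le le_rfl
  · rintro V ⟨⟨i, j⟩, ⟨hik, hjl⟩, rfl⟩
    obtain ⟨c, hc⟩ := hUball ⟨i, hik⟩
    obtain ⟨c', hc'⟩ := hOball ⟨j, hjl⟩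
    obtain ⟨t, ht, hball⟩ := hleb (c, c') (Set.mem_univ _)
    refine ⟨t, ht, ?_⟩
    intro z hz
    apply hball
    rw [← ball_prod_same]
    exact ⟨hc (hφmem _ _ (hφpos i hik j z hz)), hc' (hψmem _ _ (hψpos j hjl i z hz))⟩
  · rintro z
    set Sz : Finset (ℕ × ℕ) :=
      (Finset.range k ×ˢ Finset.range l).filter (fun q => z ∈ W q.1 q.2) with hSz
    have hsub : {V | V ∈ 𝒱 ∧ z ∈ V} ⊆ (fun q : ℕ × ℕ => W q.1 q.2) '' ↑Sz := by
      rintro V ⟨⟨⟨i, j⟩, ⟨hik, hjl⟩, rfl⟩, hzV⟩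
      refine ⟨(i, j), ?_, rfl⟩
      simp only [hSz, Finset.coe_filter, Finset.mem_product, Finset.mem_range]
      exact ⟨⟨hik, hjl⟩, hzV⟩
    have hcard1 : {V | V ∈ 𝒱 ∧ z ∈ V}.encard ≤ (Sz.card : ℕ∞) := by
      calc {V | V ∈ 𝒱 ∧ z ∈ V}.encard ≤ ((fun q : ℕ × ℕ => W q.1 q.2) '' ↑Sz).encard :=
            Set.encard_le_encard hsub
        _ ≤ (↑Sz : Set (ℕ × ℕ)).encard := Set.encard_image_le _ _
        _ = (Sz.card : ℕ∞) := Set.encard_coe_eq_coe_finsetCard Sz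
    -- chain property
    have hchain : ∀ q ∈ Sz, ∀ q' ∈ Sz, (q.1 ≤ q'.1 ∧ q.2 ≤ q'.2) ∨ (q'.1 ≤ q.1 ∧ q'.2 ≤ q.2) := by
      have hkey : ∀ q ∈ Sz, ∀ q' ∈ Sz, q.1 < q'.1 → q.2 ≤ q'.2 := by
        intro q hq q' hq' h1
        by_contra h2
        push_neg at h2
        have hzq : z ∈ W q.1 q.2 := (Finset.mem_filter.1 hq).2
        have hzq' : z ∈ W q'.1 q'.2 := (Finset.mem_filter.1 hq').2
        have e1 : B q.2 z.2 < A (q.1 + 1) z.1 :=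
          lt_of_le_of_lt (le_max_right _ _) (lt_of_lt_of_le hzq (min_le_left _ _))
        have e2 : A q'.1 z.1 < B (q'.2 + 1) z.2 :=
          lt_of_le_of_lt (le_max_left _ _) (lt_of_lt_of_le hzq' (min_le_right _ _))
        have e3 : A (q.1 + 1) z.1 ≤ A q'.1 z.1 := hAmono _ _ _ h1
        have e4 : B (q'.2 + 1) z.2 ≤ B q.2 z.2 := hBmono _ _ _ h2
        linarith
      intro q hq q' hq'
      rcases lt_trichotomy q.1 q'.1 with h | h | h
      · exact Or.inl ⟨h.le, hkey q hq q' hq' h⟩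
      · rcases le_total q.2 q'.2 with h2 | h2
        · exact Or.inl ⟨h.le, h2⟩
        · exact Or.inr ⟨h.ge, h2⟩
      · exact Or.inr ⟨h.le, hkey q' hq' q hq h⟩
    -- image bounds
    have himf : ((Sz.image Prod.fst).card : ℕ∞) ≤ (m : ℕ∞) + 1 := by
      have hmap : (↑(Sz.image Prod.fst) : Set ℕ) ⊆ Fin.val '' {i : Fin k | φ i z.1 ≠ 0} := by
        intro i hi
        simp only [Finset.coe_image, Set.mem_image] at hi
        obtain ⟨q, hq, rfl⟩ := hi
        have hq' := Finset.mem_filter.1 hq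
        have hik : q.1 < k := (Finset.mem_range.1 (Finset.mem_product.1 hq'.1).1)
        exact ⟨⟨q.1, hik⟩, hφpos q.1 hik q.2 z hq'.2, rfl⟩
      calc ((Sz.image Prod.fst).card : ℕ∞) = (↑(Sz.image Prod.fst) : Set ℕ).encard :=
            (Set.encard_coe_eq_coe_finsetCard _).symm
        _ ≤ (Fin.val '' {i : Fin k | φ i z.1 ≠ 0}).encard := Set.encard_le_encard hmap
        _ = ({i : Fin k | φ i z.1 ≠ 0} : Set (Fin k)).encard :=
            (Fin.val_injective.injOn).encard_image
        _ ≤ (m : ℕ∞) + 1 := hφord z.1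
    have hims : ((Sz.image Prod.snd).card : ℕ∞) ≤ (n : ℕ∞) + 1 := by
      have hmap : (↑(Sz.image Prod.snd) : Set ℕ) ⊆ Fin.val '' {j : Fin l | ψ j z.2 ≠ 0} := by
        intro j hj
        simp only [Finset.coe_image, Set.mem_image] at hj
        obtain ⟨q, hq, rfl⟩ := hj
        have hq' := Finset.mem_filter.1 hq
        have hjl : q.2 < l := (Finset.mem_range.1 (Finset.mem_product.1 hq'.1).2)
        exact ⟨⟨q.2, hjl⟩, hψpos q.2 hjl q.1 z hq'.2, rfl⟩
      calc ((Sz.image Prod.snd).card : ℕ∞) = (↑(Sz.image Prod.snd) : Set ℕ).encard :=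
            (Set.encard_coe_eq_coe_finsetCard _).symm
        _ ≤ (Fin.val '' {j : Fin l | ψ j z.2 ≠ 0}).encard := Set.encard_le_encard hmap
        _ = ({j : Fin l | ψ j z.2 ≠ 0} : Set (Fin l)).encard :=
            (Fin.val_injective.injOn).encard_image
        _ ≤ (n : ℕ∞) + 1 := hψord z.2
    -- conclude
    have hfinal : Sz.card ≤ m + n + 1 := by
      rcases Sz.eq_empty_or_nonempty with h0 | hne'
      · rw [h0]; simp
      · have := chain_card Sz.card Sz le_rfl hne' hchain
        have h1 : (Sz.image Prod.fst).card ≤ m + 1 := by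
          have h' := himf
          rw [show ((m : ℕ∞) + 1) = ((m + 1 : ℕ) : ℕ∞) by push_cast; ring] at h'
          exact_mod_cast h'
        have h2 : (Sz.image Prod.snd).card ≤ n + 1 := by
          have h' := hims
          rw [show ((n : ℕ∞) + 1) = ((n + 1 : ℕ) : ℕ∞) by push_cast; ring] at h'
          exact_mod_cast h'
        omega
    calc {V | V ∈ 𝒱 ∧ z ∈ V}.encard ≤ (Sz.card : ℕ∞) := hcard1
      _ ≤ ((m + n + 1 : ℕ) : ℕ∞) := by exact_mod_cast hfinal
      _ = ((m + n : ℕ) : ℕ∞) + 1 := by push_cast; ring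


/-! ### Widim helpers and subadditivity -/

lemma widim_le {X : Type u} [TopologicalSpace X] {d : X → X → ℝ} {ε : ℝ}
    (P : Type u) (tP : TopologicalSpace P) (h1 : @CompactSpace P tP)
    (h2 : @TopologicalSpace.MetrizableSpace P tP) (f : X → P) (hf : @Continuous X P _ tP f)
    (hemb : ∀ x y : X, f x = f y → d x y < ε) : Widim X d ε ≤ @covDim P tP :=
  sInf_le ⟨P, tP, h1, h2, f, hf, hemb, rfl⟩

lemma widim_mem_of_ne_top {X : Type u} [TopologicalSpace X] {d : X → X → ℝ} {ε : ℝ}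
    (h : Widim X d ε ≠ ⊤) :
    ∃ (P : Type u) (tP : TopologicalSpace P),
      @CompactSpace P tP ∧ @TopologicalSpace.MetrizableSpace P tP ∧
      ∃ f : X → P, @Continuous X P _ tP f ∧ (∀ x y : X, f x = f y → d x y < ε) ∧
        @covDim P tP = Widim X d ε := by
  have hne : {k : ℕ∞ | ∃ (P : Type u) (tP : TopologicalSpace P),
      @CompactSpace P tP ∧ @TopologicalSpace.MetrizableSpace P tP ∧
      ∃ f : X → P, @Continuous X P _ tP f ∧ (∀ x y : X, f x = f y → d x y < ε) ∧
        @covDim P tP = k}.Nonempty := by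
    by_contra hc
    rw [Set.not_nonempty_iff_eq_empty] at hc
    exact h (by rw [Widim, hc, sInf_empty])
  exact enat_sInf_mem hne

lemma widim_dynDist_subadd {Y : Type u} [MetricSpace Y] {T : Y → Y} (hT : Continuous T)
    (ε : ℝ) {m k : ℕ} (hmk : m + k ≠ 0) :
    Widim Y (dynDist T (fun x y => dist x y) (m + k)) ε ≤
      Widim Y (dynDist T (fun x y => dist x y) m) ε +
      Widim Y (dynDist T (fun x y => dist x y) k) ε := by
  rcases eq_or_ne (Widim Y (dynDist T (fun x y => dist x y) m) ε) ⊤ with hma | hma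
  · rw [hma, top_add]; exact le_top
  rcases eq_or_ne (Widim Y (dynDist T (fun x y => dist x y) k) ε) ⊤ with hka | hka
  · rw [hka, add_top]; exact le_top
  obtain ⟨P, tP, hPc, hPm, f, hfc, hfe, hfd⟩ := widim_mem_of_ne_top hma
  obtain ⟨Q, tQ, hQc, hQm, g, hgc, hge, hgd⟩ := widim_mem_of_ne_top hka
  letI := tP; letI := tQ
  haveI := hPc; haveI := hPm; haveI := hQc; haveI := hQm
  letI mP : MetricSpace P := TopologicalSpace.metrizableSpaceMetric P
  letI mQ : MetricSpace Q := TopologicalSpace.metrizableSpaceMetric Q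
  have hcdP : @covDim P tP ≠ ⊤ := hfd.symm ▸ hma
  have hcdQ : @covDim Q tQ ≠ ⊤ := hgd.symm ▸ hka
  obtain ⟨na, hna⟩ : ∃ n : ℕ, (n : ℕ∞) = covDim P := by
    lift covDim P to ℕ using hcdP with n hn; exact ⟨n, rfl⟩
  obtain ⟨nb, hnb⟩ : ∃ n : ℕ, (n : ℕ∞) = covDim Q := by
    lift covDim Q to ℕ using hcdQ with n hn; exact ⟨n, rfl⟩
  have hP : HasCovDimLE P na := hasCovDimLE_of_covDim_le (le_of_eq hna.symm)
  have hQ : HasCovDimLE Q nb := hasCovDimLE_of_covDim_le (le_of_eq hnb.symm)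
  have hprod : HasCovDimLE (P × Q) (na + nb) := hasCovDimLE_prod hP hQ
  have hcd : covDim (P × Q) ≤ ((na + nb : ℕ) : ℕ∞) := covDim_le_of_hasCovDimLE hprod
  have hle : Widim Y (dynDist T (fun x y => dist x y) (m + k)) ε ≤ covDim (P × Q) := by
    apply widim_le (P × Q) inferInstance inferInstance inferInstance
      (fun x => (f x, g (T^[m] x)))
      (hfc.prodMk (hgc.comp (hT.iterate m)))
    intro x y h
    have hf1 : f x = f y := congrArg Prod.fst h
    have hg1 : g (T^[m] x) = g (T^[m] y) := congrArg Prod.snd h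
    have h1 := hfe x y hf1
    have h2 := hge _ _ hg1
    apply dynDist_lt T _ hmk
    intro i
    rcases Nat.lt_or_ge (i : ℕ) m with hi | hi
    · exact lt_of_le_of_lt (le_dynDist T _ (⟨(i : ℕ), hi⟩ : Fin m) x y) h1
    · have hj : (i : ℕ) - m < k := by
        have := i.isLt; omega
      have hrw : (i : ℕ) = ((i : ℕ) - m) + m := by omega
      have hkey : ∀ w : Y, T^[(i : ℕ)] w = T^[(i : ℕ) - m] (T^[m] w) := by
        intro w
        conv_lhs => rw [hrw]
        exact Function.iterate_add_apply T _ m w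
      calc dist (T^[(i : ℕ)] x) (T^[(i : ℕ)] y)
          = dist (T^[(i : ℕ) - m] (T^[m] x)) (T^[(i : ℕ) - m] (T^[m] y)) := by
            rw [hkey x, hkey y]
        _ ≤ dynDist T (fun x y => dist x y) k (T^[m] x) (T^[m] y) :=
            le_dynDist T _ (⟨(i : ℕ) - m, hj⟩ : Fin k) _ _
        _ < ε := h2
  calc Widim Y (dynDist T (fun x y => dist x y) (m + k)) ε ≤ covDim (P × Q) := hle
    _ ≤ ((na + nb : ℕ) : ℕ∞) := hcd
    _ = (na : ℕ∞) + (nb : ℕ∞) := by push_cast; ring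
    _ = _ := by rw [hna, hnb, hfd, hgd]


/-! ### Orbits of the cyclic extension -/

lemma mod_eq_pred_iff_dvd_succ {a p : ℕ} (hp : 0 < p) : a % p = p - 1 ↔ p ∣ a + 1 := by
  constructor
  · intro h
    have h1 := Nat.div_add_mod a p
    have h2 : p * (a / p + 1) = p * (a / p) + p := Nat.mul_succ p (a / p)
    exact ⟨a / p + 1, by omega⟩
  · rintro ⟨t, ht⟩
    have ht1 : 1 ≤ t := by
      rcases Nat.eq_zero_or_pos t with h | h
      · rw [h, mul_zero] at ht; omega
      · exact h
    have hmul : p * t = p * (t - 1) + p := by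
      conv_lhs => rw [show t = (t - 1) + 1 by omega]
      ring
    have ha : a = p - 1 + p * (t - 1) := by omega
    rw [ha, Nat.add_mul_mod_self_left]
    exact Nat.mod_eq_of_lt (by omega)

open Fin.NatCast in
lemma cyclicExt_iterate {Y : Type*} (T : Y → Y) (p : ℕ) [NeZero p] (i : ℕ) (y : Y) (j : Fin p) :
    (cyclicExt T p)^[i] (y, j) = (T^[((j : ℕ) + i) / p] y, j + (i : Fin p)) := by
  have hp : 0 < p := Nat.pos_of_ne_zero (NeZero.ne p)
  induction i with
  | zero =>
    simp only [Function.iterate_zero, id_eq, Nat.add_zero]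
    rw [Nat.div_eq_of_lt j.isLt]
    simp
  | succ i ih =>
    rw [Function.iterate_succ_apply', ih]
    have hval : ((j + (i : Fin p) : Fin p) : ℕ) = ((j : ℕ) + i) % p := by
      rw [Fin.val_add, Fin.val_natCast, Nat.add_mod_mod]
    apply Prod.ext
    · show (if ((j + (i : Fin p) : Fin p) : ℕ) = p - 1
          then T (T^[((j : ℕ) + i) / p] y) else T^[((j : ℕ) + i) / p] y)
          = T^[((j : ℕ) + (i + 1)) / p] y
      rw [hval]
      by_cases h : ((j : ℕ) + i) % p = p - 1
      · rw [if_pos h]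
        have hdvd : p ∣ (j : ℕ) + i + 1 := (mod_eq_pred_iff_dvd_succ hp).1 h
        rw [show (j : ℕ) + (i + 1) = ((j : ℕ) + i) + 1 by ring, Nat.succ_div, if_pos hdvd,
          Function.iterate_succ_apply']
      · rw [if_neg h]
        have hdvd : ¬ p ∣ (j : ℕ) + i + 1 := fun hd => h ((mod_eq_pred_iff_dvd_succ hp).2 hd)
        rw [show (j : ℕ) + (i + 1) = ((j : ℕ) + i) + 1 by ring, Nat.succ_div, if_neg hdvd,
          add_zero]
    · show (j + (i : Fin p)) + 1 = j + ((i + 1 : ℕ) : Fin p)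
      rw [Nat.cast_add, Nat.cast_one, add_assoc]


/-! ### Widim of the cyclic extension -/

open Fin.NatCast in
lemma widim_cyclicExt_eq (Y : Type*) [MetricSpace Y] (p : ℕ) [NeZero p] (T : Y ≃ₜ Y)
    {n : ℕ} (hn : n ≠ 0) (ε : ℝ) :
    Widim (Y × Fin p)
      (dynDist (cyclicExt (⇑T) p)
        (fun z w => max (dist z.1 w.1) (if z.2 = w.2 then 0 else (1 : ℝ))) n) ε
    = Widim Y (dynDist (⇑T) (fun x y => dist x y) ((p - 1 + (n - 1)) / p + 1)) ε := by
  have hp : 0 < p := Nat.pos_of_ne_zero (NeZero.ne p)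
  set M : ℕ := (p - 1 + (n - 1)) / p + 1 with hM
  apply le_antisymm
  · -- ≤ : embed Y × Fin p into P × Fin p
    apply le_sInf
    rintro k ⟨P, tP, hPc, hPm, g, hgc, hge, hgd⟩
    letI := tP
    haveI := hPc; haveI := hPm
    have h1 : Widim (Y × Fin p)
        (dynDist (cyclicExt (⇑T) p)
          (fun z w => max (dist z.1 w.1) (if z.2 = w.2 then 0 else (1 : ℝ))) n) ε
        ≤ covDim (P × Fin p) := by
      apply widim_le (P × Fin p) inferInstance inferInstance inferInstance
        (fun z => (g z.1, z.2)) (by exact (hgc.comp continuous_fst).prodMk continuous_snd)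
      rintro ⟨z1, z2⟩ ⟨w1, w2⟩ h
      have hg1 : g z1 = g w1 := congrArg Prod.fst h
      have hj : z2 = w2 := congrArg Prod.snd h
      subst hj
      have hdyn := hge z1 w1 hg1
      apply dynDist_lt _ _ hn
      intro i
      rw [cyclicExt_iterate (⇑T) p (i : ℕ) z1 z2, cyclicExt_iterate (⇑T) p (i : ℕ) w1 z2]
      rw [if_pos rfl, max_eq_left dist_nonneg]
      have hq : ((z2 : ℕ) + (i : ℕ)) / p < M := by
        rw [hM]
        have h2 : ((z2 : ℕ) + (i : ℕ)) / p ≤ (p - 1 + (n - 1)) / p :=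
          Nat.div_le_div_right (by have := z2.isLt; have := i.isLt; omega)
        omega
      calc dist (T^[(((z2 : ℕ) + (i : ℕ)) / p)] z1) (T^[(((z2 : ℕ) + (i : ℕ)) / p)] w1)
          ≤ dynDist (⇑T) (fun x y => dist x y) M z1 w1 :=
            le_dynDist (⇑T) _ (⟨((z2 : ℕ) + (i : ℕ)) / p, hq⟩ : Fin M) z1 w1
        _ < ε := hdyn
    exact h1.trans ((covDim_prod_fin_le p).trans_eq hgd)
  · -- ≥ : embed Y into P via y ↦ f (y, p-1)
    apply le_sInf
    rintro k ⟨P, tP, hPc, hPm, f, hfc, hfe, hfd⟩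
    letI := tP
    haveI := hPc; haveI := hPm
    rw [← hfd]
    apply widim_le P tP hPc hPm (fun y => f (y, (⟨p - 1, by omega⟩ : Fin p)))
      (hfc.comp (continuous_id.prodMk continuous_const))
    intro y y' h
    have hd := hfe _ _ h
    apply dynDist_lt _ _ (Nat.succ_ne_zero _)
    intro kk
    have hkk : (kk : ℕ) ≤ (p - 1 + (n - 1)) / p := Nat.lt_succ_iff.1 kk.isLt
    have hkp : (kk : ℕ) * p ≤ p - 1 + (n - 1) := (Nat.le_div_iff_mul_le hp).1 hkk
    set i : ℕ := if (kk : ℕ) = 0 then 0 else ((kk : ℕ) - 1) * p + 1 with hidef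
    have hstep : ((kk : ℕ) - 1) * p + p = (kk : ℕ) * p ∨ (kk : ℕ) = 0 := by
      rcases Nat.eq_zero_or_pos (kk : ℕ) with h0 | h0
      · exact Or.inr h0
      · left
        calc ((kk : ℕ) - 1) * p + p = (((kk : ℕ) - 1) + 1) * p := by ring
          _ = (kk : ℕ) * p := by rw [Nat.sub_add_cancel h0]
    have hi : i < n := by
      rw [hidef]
      split_ifs with h0
      · omega
      · rcases hstep with hs | hs
        · omega
        · exact absurd hs h0
    have hkey : (p - 1 + i) / p = (kk : ℕ) := by
      rw [hidef]
      split_ifs with h0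
      · rw [h0, Nat.add_zero]
        exact Nat.div_eq_of_lt (by omega)
      · rcases hstep with hs | hs
        · have : p - 1 + (((kk : ℕ) - 1) * p + 1) = (kk : ℕ) * p := by omega
          rw [this]
          exact Nat.mul_div_cancel _ hp
        · exact absurd hs h0
    calc dist (T^[(kk : ℕ)] y) (T^[(kk : ℕ)] y')
        ≤ max (dist (T^[(kk : ℕ)] y) (T^[(kk : ℕ)] y'))
          (if ((⟨p - 1, by omega⟩ : Fin p) + (i : Fin p) : Fin p)
            = ((⟨p - 1, by omega⟩ : Fin p) + (i : Fin p) : Fin p) then (0 : ℝ) else 1) :=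
          le_max_left _ _
      _ = (fun z w => max (dist z.1 w.1) (if z.2 = w.2 then 0 else (1 : ℝ)))
            ((cyclicExt (⇑T) p)^[i] (y, (⟨p - 1, by omega⟩ : Fin p)))
            ((cyclicExt (⇑T) p)^[i] (y', (⟨p - 1, by omega⟩ : Fin p))) := by
          rw [cyclicExt_iterate (⇑T) p i y _, cyclicExt_iterate (⇑T) p i y' _]
          rw [hkey]
      _ ≤ dynDist (cyclicExt (⇑T) p)
            (fun z w => max (dist z.1 w.1) (if z.2 = w.2 then 0 else (1 : ℝ))) n
            (y, (⟨p - 1, by omega⟩ : Fin p)) (y', (⟨p - 1, by omega⟩ : Fin p)) := by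
          have := le_dynDist (cyclicExt (⇑T) p)
            (fun z w => max (dist z.1 w.1) (if z.2 = w.2 then 0 else (1 : ℝ)))
            (⟨i, hi⟩ : Fin n) (y, (⟨p - 1, by omega⟩ : Fin p)) (y', (⟨p - 1, by omega⟩ : Fin p))
          exact this
      _ < ε := hd


/-! ### ENNReal infimum arithmetic -/

lemma iInf_div_const {ι : Sort*} [Nonempty ι] (f : ι → ℝ≥0∞) {c : ℝ≥0∞}
    (hc0 : c ≠ 0) (hct : c ≠ ⊤) : ⨅ i, f i / c = (⨅ i, f i) / c := by
  apply le_antisymm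
  · rw [ENNReal.le_div_iff_mul_le (Or.inl hc0) (Or.inl hct)]
    apply le_iInf
    intro i
    calc (⨅ j, f j / c) * c ≤ (f i / c) * c := mul_le_mul_left (iInf_le _ i) c
      _ = f i := ENNReal.div_mul_cancel hc0 hct
  · exact le_iInf fun i => ENNReal.div_le_div_right (iInf_le f i) c

lemma key_inf {p : ℕ} (hp : 0 < p) (v : ℕ → ℝ≥0∞)
    (hmono : ∀ a b : ℕ, a ≠ 0 → a ≤ b → v a ≤ v b)
    (hsub : ∀ a b : ℕ, a ≠ 0 → b ≠ 0 → v (a + b) ≤ v a + v b) :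
    ⨅ n : ℕ+, v ((p - 1 + ((n : ℕ) - 1)) / p + 1) / ((n : ℕ) : ℝ≥0∞)
      = (⨅ m : ℕ+, v (m : ℕ) / ((m : ℕ) : ℝ≥0∞)) / (p : ℝ≥0∞) := by
  have hp0 : (p : ℝ≥0∞) ≠ 0 := by exact_mod_cast hp.ne'
  have hpt : (p : ℝ≥0∞) ≠ ⊤ := ENNReal.natCast_ne_top p
  have hstep1 : ⨅ n : ℕ+, v ((p - 1 + ((n : ℕ) - 1)) / p + 1) / ((n : ℕ) : ℝ≥0∞)
      = ⨅ m : ℕ+, v (m : ℕ) / ((p : ℝ≥0∞) * ((m : ℕ) : ℝ≥0∞)) := by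
    apply le_antisymm
    · -- LHS ≤ RHS'
      apply le_iInf
      intro m
      by_cases hvm : v (m : ℕ) = ⊤
      · rw [hvm, ENNReal.top_div_of_ne_top (by
          exact ENNReal.mul_ne_top hpt (ENNReal.natCast_ne_top _))]
        exact le_top
      have hv1 : v 1 ≠ ⊤ := ne_top_of_le_ne_top hvm (hmono 1 (m : ℕ) one_ne_zero m.pos)
      apply ENNReal.le_of_forall_pos_le_add
      intro δ hδ _
      have hδ0 : ((δ : ℝ≥0∞)) ≠ 0 := by exact_mod_cast hδ.ne'
      obtain ⟨K, hK⟩ := ENNReal.exists_nat_gt (ENNReal.div_lt_top hv1 hδ0).ne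
      set k : ℕ := K + 1 with hkdef
      have hk0 : k ≠ 0 := Nat.succ_ne_zero K
      have hkc0 : ((k : ℕ) : ℝ≥0∞) ≠ 0 := by exact_mod_cast hk0
      have hkct : ((k : ℕ) : ℝ≥0∞) ≠ ⊤ := ENNReal.natCast_ne_top k
      have hδk : v 1 / (k : ℝ≥0∞) ≤ (δ : ℝ≥0∞) := by
        have h1 : v 1 / (δ : ℝ≥0∞) < (k : ℝ≥0∞) := hK.trans_le (by exact_mod_cast Nat.le_succ K)
        have h2 : v 1 < (k : ℝ≥0∞) * (δ : ℝ≥0∞) :=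
          (ENNReal.div_lt_iff (Or.inl hδ0) (Or.inl ENNReal.coe_ne_top)).1 h1
        rw [ENNReal.div_le_iff_le_mul (Or.inl hkc0) (Or.inr hδ0)]
        rw [mul_comm] at h2
        exact h2.le
      -- choose n = p * m * k + 1
      have hMn : (p - 1 + ((p * (m : ℕ) * k + 1 : ℕ) - 1)) / p + 1 = (m : ℕ) * k + 1 := by
        have h1 : p * (m : ℕ) * k + 1 - 1 = p * ((m : ℕ) * k) := by
          rw [Nat.add_sub_cancel, mul_assoc]
        rw [h1, show p - 1 + p * ((m : ℕ) * k) = p * ((m : ℕ) * k) + (p - 1) by omega]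
        rw [Nat.mul_add_div hp, Nat.div_eq_of_lt (by omega), Nat.add_zero]
      have hsubmul : ∀ j : ℕ, j ≠ 0 → v ((m : ℕ) * j) ≤ (j : ℝ≥0∞) * v (m : ℕ) := by
        intro j
        induction j with
        | zero => intro h; exact absurd rfl h
        | succ j ih =>
          intro _
          rcases Nat.eq_zero_or_pos j with h0 | h0
          · subst h0
            rw [Nat.mul_one, Nat.cast_one, one_mul]
          · calc v ((m : ℕ) * (j + 1)) = v ((m : ℕ) * j + (m : ℕ)) := by rw [Nat.mul_succ]
              _ ≤ v ((m : ℕ) * j) + v (m : ℕ) :=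
                hsub _ _ (Nat.mul_ne_zero m.pos.ne' h0.ne') m.pos.ne'
              _ ≤ (j : ℝ≥0∞) * v (m : ℕ) + v (m : ℕ) := add_le_add_left (ih h0.ne') _
              _ = ((j + 1 : ℕ) : ℝ≥0∞) * v (m : ℕ) := by push_cast; ring
      have hvMn : v ((m : ℕ) * k + 1) ≤ (k : ℝ≥0∞) * v (m : ℕ) + v 1 :=
        calc v ((m : ℕ) * k + 1) ≤ v ((m : ℕ) * k) + v 1 :=
              hsub _ _ (Nat.mul_ne_zero m.pos.ne' hk0) one_ne_zero
          _ ≤ (k : ℝ≥0∞) * v (m : ℕ) + v 1 := add_le_add_left (hsubmul k hk0) _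
      have hden1 : ((k : ℕ) : ℝ≥0∞) * ((p : ℝ≥0∞) * ((m : ℕ) : ℝ≥0∞))
          ≤ ((p * (m : ℕ) * k + 1 : ℕ) : ℝ≥0∞) := by
        have h1 : (k * (p * (m : ℕ)) : ℕ) ≤ p * (m : ℕ) * k + 1 := by
          have : k * (p * (m : ℕ)) = p * (m : ℕ) * k := by ring
          omega
        calc ((k : ℕ) : ℝ≥0∞) * ((p : ℝ≥0∞) * ((m : ℕ) : ℝ≥0∞))
            = ((k * (p * (m : ℕ)) : ℕ) : ℝ≥0∞) := by push_cast; ring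
          _ ≤ _ := by exact_mod_cast h1
      have hdenk : ((k : ℕ) : ℝ≥0∞) ≤ ((p * (m : ℕ) * k + 1 : ℕ) : ℝ≥0∞) := by
        have h1 : k ≤ p * (m : ℕ) * k + 1 := by
          have h2 : 1 * k ≤ p * (m : ℕ) * k :=
            Nat.mul_le_mul_right k (by
              have := m.pos
              calc 1 ≤ 1 * 1 := by omega
                _ ≤ p * (m : ℕ) := Nat.mul_le_mul hp this)
          omega
        exact_mod_cast h1
      calc (⨅ n : ℕ+, v ((p - 1 + ((n : ℕ) - 1)) / p + 1) / ((n : ℕ) : ℝ≥0∞))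
          ≤ v ((p - 1 + (((⟨p * (m : ℕ) * k + 1, Nat.succ_pos _⟩ : ℕ+) : ℕ) - 1)) / p + 1)
            / (((⟨p * (m : ℕ) * k + 1, Nat.succ_pos _⟩ : ℕ+) : ℕ) : ℝ≥0∞) :=
            iInf_le _ _
        _ = v ((m : ℕ) * k + 1) / ((p * (m : ℕ) * k + 1 : ℕ) : ℝ≥0∞) := by rw [hMn]
        _ ≤ ((k : ℝ≥0∞) * v (m : ℕ) + v 1) / ((p * (m : ℕ) * k + 1 : ℕ) : ℝ≥0∞) :=
            ENNReal.div_le_div_right hvMn _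
        _ = (k : ℝ≥0∞) * v (m : ℕ) / ((p * (m : ℕ) * k + 1 : ℕ) : ℝ≥0∞)
            + v 1 / ((p * (m : ℕ) * k + 1 : ℕ) : ℝ≥0∞) := ENNReal.add_div
        _ ≤ (k : ℝ≥0∞) * v (m : ℕ) / (((k : ℕ) : ℝ≥0∞) * ((p : ℝ≥0∞) * ((m : ℕ) : ℝ≥0∞)))
            + v 1 / ((k : ℕ) : ℝ≥0∞) :=
            add_le_add (ENNReal.div_le_div_left hden1 _) (ENNReal.div_le_div_left hdenk _)
        _ = v (m : ℕ) / ((p : ℝ≥0∞) * ((m : ℕ) : ℝ≥0∞)) + v 1 / ((k : ℕ) : ℝ≥0∞) := by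
            rw [ENNReal.mul_div_mul_left _ _ hkc0 hkct]
        _ ≤ v (m : ℕ) / ((p : ℝ≥0∞) * ((m : ℕ) : ℝ≥0∞)) + (δ : ℝ≥0∞) :=
            add_le_add_right hδk _
    · -- RHS' ≤ LHS
      apply le_iInf
      intro n
      set a : ℕ := p - 1 + ((n : ℕ) - 1) with ha
      set M : ℕ := a / p + 1 with hMdef
      have hlt : a < p * M := by
        have h1 : a / p < a / p + 1 := Nat.lt_succ_self _
        have h2 : a < (a / p + 1) * p := (Nat.div_lt_iff_lt_mul hp).1 h1
        calc a < (a / p + 1) * p := h2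
          _ = p * M := by rw [hMdef]; ring
      have hnpM : (n : ℕ) ≤ p * M := by
        have hn1 := n.pos
        omega
      have hcast : ((n : ℕ) : ℝ≥0∞) ≤ (p : ℝ≥0∞) * ((M : ℕ) : ℝ≥0∞) := by
        calc ((n : ℕ) : ℝ≥0∞) ≤ ((p * M : ℕ) : ℝ≥0∞) := by exact_mod_cast hnpM
          _ = (p : ℝ≥0∞) * ((M : ℕ) : ℝ≥0∞) := by push_cast; ring
      calc (⨅ m : ℕ+, v (m : ℕ) / ((p : ℝ≥0∞) * ((m : ℕ) : ℝ≥0∞)))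
          ≤ v (((⟨M, Nat.succ_pos _⟩ : ℕ+) : ℕ))
            / ((p : ℝ≥0∞) * (((⟨M, Nat.succ_pos _⟩ : ℕ+) : ℕ) : ℝ≥0∞)) := iInf_le _ _
        _ = v M / ((p : ℝ≥0∞) * ((M : ℕ) : ℝ≥0∞)) := rfl
        _ ≤ v M / ((n : ℕ) : ℝ≥0∞) := ENNReal.div_le_div_left hcast _
  rw [hstep1]
  have hstep2 : ∀ m : ℕ+, v (m : ℕ) / ((p : ℝ≥0∞) * ((m : ℕ) : ℝ≥0∞))
      = (v (m : ℕ) / ((m : ℕ) : ℝ≥0∞)) / (p : ℝ≥0∞) := by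
    intro m
    rw [div_eq_mul_inv, div_eq_mul_inv, div_eq_mul_inv, ENNReal.mul_inv (Or.inl hp0) (Or.inl hpt)]
    ring
  rw [iInf_congr hstep2]
  exact iInf_div_const _ hp0 hpt


/-- `mdim(Y × ℤ_p, S) = mdim(Y, T)/p`, where `S` is the `p`-cyclic extension of `(Y, T)`
and `Y × ℤ_p` carries (a metric compatible with) the product topology. -/
theorem mdim_cyclicExt (Y : Type*) [MetricSpace Y] [CompactSpace Y]
    (p : ℕ) [NeZero p] (T : Y ≃ₜ Y) :
    mdim (cyclicExt ⇑T p)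
        (fun z w => max (dist z.1 w.1) (if z.2 = w.2 then 0 else (1 : ℝ))) =
      mdim ⇑T (fun x y => dist x y) / (p : ℝ≥0∞) := by
  have hp : 0 < p := Nat.pos_of_ne_zero (NeZero.ne p)
  rw [mdim, mdim, ENNReal.iSup_div]
  apply iSup_congr
  intro ε
  set v : ℕ → ℝ≥0∞ :=
    fun m => ((Widim Y (dynDist (⇑T) (fun x y => dist x y) m) ε.1 : ℕ∞) : ℝ≥0∞) with hv
  have hmono : ∀ a b : ℕ, a ≠ 0 → a ≤ b → v a ≤ v b := by
    intro a b ha hab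
    exact ENat.toENNReal_le.2 (Widim_mono_d (fun x y => dynDist_mono _ _ ha hab x y))
  have hsub : ∀ a b : ℕ, a ≠ 0 → b ≠ 0 → v (a + b) ≤ v a + v b := by
    intro a b ha hb
    rw [hv]
    simp only []
    rw [← ENat.toENNReal_add]
    exact ENat.toENNReal_le.2 (widim_dynDist_subadd T.continuous ε.1 (by omega))
  have h1 : ∀ n : ℕ+,
      ((Widim (Y × Fin p)
        (dynDist (cyclicExt ⇑T p)
          (fun z w => max (dist z.1 w.1) (if z.2 = w.2 then 0 else (1 : ℝ))) (n : ℕ)) ε.1 : ℕ∞)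
        : ℝ≥0∞) = v ((p - 1 + ((n : ℕ) - 1)) / p + 1) := by
    intro n
    rw [hv]
    simp only []
    rw [widim_cyclicExt_eq Y p T (n.pos.ne') ε.1]
  calc (⨅ n : ℕ+, ((Widim (Y × Fin p)
        (dynDist (cyclicExt ⇑T p)
          (fun z w => max (dist z.1 w.1) (if z.2 = w.2 then 0 else (1 : ℝ))) (n : ℕ)) ε.1 : ℕ∞)
        : ℝ≥0∞) / ((n : ℕ) : ℝ≥0∞))
      = ⨅ n : ℕ+, v ((p - 1 + ((n : ℕ) - 1)) / p + 1) / ((n : ℕ) : ℝ≥0∞) :=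
        iInf_congr (fun n => by rw [h1 n])
    _ = (⨅ m : ℕ+, v (m : ℕ) / ((m : ℕ) : ℝ≥0∞)) / (p : ℝ≥0∞) := key_inf hp v hmono hsub


end
end
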